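/- arXiv:2511.04197 — 13 statements merged into one kernel-verified Lean document; each statement's English description precedes it below -/
import Mathlib

section
/- Let n be a natural number, λ : Fin n → ℝ, and set Λ = diag(λᵢ), |Λ⁻| = diag(−min(λᵢ,0)), √|Λ⁻| = diag(√(−min(λᵢ,0))), and let I⁻ = diag(if λᵢ < 0 then 1 else 0). Let T be any real n×n matrix, let U, G ∈ ℝⁿ, and set W = Tᵀ U and W⁻ = I⁻ W. Then Wᵀ Λ W + Uᵀ (2 T I⁻ √|Λ⁻| (√|Λ⁻| W⁻ − G)) ≥ −Gᵀ G. -/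
/-!
Since `√|Λ⁻|` vanishes wherever `I⁻` does, `I⁻ √|Λ⁻| = √|Λ⁻| I⁻ = √|Λ⁻|`, and
transposing `T` onto `U` turns the left-hand side into `Wᵀ Λ W + 2 Wᵀ S (S W − G)`
with `S = √|Λ⁻|`. Completing the square gives `Wᵀ (Λ + S²) W + |S W − G|² − |G|²`,
and `Λ + S² = diag(max(λᵢ, 0)) ≥ 0`.
-/

open Matrix

lemma indicator_neg_mul_sqrt_neg_min (a : ℝ) :
    (if a < 0 then (1 : ℝ) else 0) * √(-min a 0) = √(-min a 0) := by
  split_ifs with h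
  · exact one_mul _
  · rw [min_eq_right (not_lt.mp h), neg_zero, Real.sqrt_zero, mul_zero]

lemma add_sqrt_neg_min_mul_self_nonneg (a : ℝ) : 0 ≤ a + √(-min a 0) * √(-min a 0) := by
  rw [Real.mul_self_sqrt (neg_nonneg.mpr (min_le_right a 0))]
  rcases le_total a 0 with h | h
  · rw [min_eq_left h, add_neg_cancel]
  · rw [min_eq_right h, neg_zero, add_zero]
    exact h

section Diagonal

variable {n : Type*} [Fintype n] [DecidableEq n]

lemma neg_dotProduct_self_le_of_diagonal (a s : n → ℝ) (hs : ∀ i, 0 ≤ a i + s i * s i)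
    (w g : n → ℝ) :
    -(g ⬝ᵥ g) ≤
      w ⬝ᵥ diagonal a *ᵥ w + 2 * (w ⬝ᵥ diagonal s *ᵥ (diagonal s *ᵥ w - g)) := by
  simp only [dotProduct, mulVec_diagonal, Pi.sub_apply, Finset.mul_sum,
    ← Finset.sum_add_distrib, ← Finset.sum_neg_distrib]
  refine Finset.sum_le_sum fun i _ => ?_
  -- `wλw + 2ws(sw - g) = (λ + s²)w² + (sw - g)² - g²`
  nlinarith [mul_nonneg (hs i) (mul_self_nonneg (w i)), mul_self_nonneg (s i * w i - g i)]

end Diagonal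

/-- Theorem 1 of the paper (nonlinearly stable SAT inequality):
`Wᵀ Λ W + Uᵀ (2 T I⁻ √|Λ⁻| (√|Λ⁻| W⁻ − G)) ≥ −Gᵀ G`. -/
theorem sat_inequality (n : ℕ) (lam : Fin n → ℝ) (T : Matrix (Fin n) (Fin n) ℝ)
    (U G : Fin n → ℝ) :
    let Λ : Matrix (Fin n) (Fin n) ℝ := Matrix.diagonal lam
    let sqrtAbsΛm : Matrix (Fin n) (Fin n) ℝ :=
      Matrix.diagonal (fun i => Real.sqrt (-(min (lam i) 0)))
    let Iminus : Matrix (Fin n) (Fin n) ℝ :=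
      Matrix.diagonal (fun i => if lam i < 0 then (1 : ℝ) else 0)
    let W : Fin n → ℝ := Tᵀ.mulVec U
    let Wm : Fin n → ℝ := Iminus.mulVec W
    W ⬝ᵥ Λ.mulVec W +
      U ⬝ᵥ ((2 : ℝ) • (T * Iminus * sqrtAbsΛm)).mulVec (sqrtAbsΛm.mulVec Wm - G)
      ≥ -(G ⬝ᵥ G) := by
  intro Λ S I W Wm
  have hIS : I * S = S := by
    simp only [I, S, diagonal_mul_diagonal, indicator_neg_mul_sqrt_neg_min]
  have hSI : S * I = S := by
    simp only [I, S, diagonal_mul_diagonal, mul_comm _ (ite _ _ _),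
      indicator_neg_mul_sqrt_neg_min]
  have hSWm : S *ᵥ Wm = S *ᵥ W := by rw [mulVec_mulVec, hSI]
  have hU : ∀ v, U ⬝ᵥ ((2 : ℝ) • (T * I * S)) *ᵥ v = 2 * (W ⬝ᵥ S *ᵥ v) := fun v => by
    rw [Matrix.mul_assoc, hIS, smul_mulVec, dotProduct_smul, ← mulVec_mulVec,
      dotProduct_mulVec, ← mulVec_transpose, smul_eq_mul]
  rw [hU, hSWm, ge_iff_le]
  exact neg_dotProduct_self_le_of_diagonal lam _
    (fun i => add_sqrt_neg_min_mul_self_nonneg (lam i)) W G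
end

section
/- Let n, m be natural numbers, λ : Fin n → ℝ, Λ = diag(λᵢ), |Λ⁻| = diag(−min(λᵢ,0)), √|Λ⁻| = diag(√(−min(λᵢ,0))), I⁻ = diag(if λᵢ < 0 then 1 else 0), T a real n×n matrix, U, G ∈ ℝⁿ, W = Tᵀ U, W⁻ = I⁻ W. Suppose V, F*, F ∈ ℝᵐ satisfy Vᵀ(F* − F) = Uᵀ(2 T I⁻ √|Λ⁻| (√|Λ⁻| W⁻ − G)). Then the boundary term satisfies Wᵀ Λ W + Vᵀ(F* − F) ≥ −Gᵀ G; in particular, if the entropy flux is F^ent = Wᵀ Λ W, then F^ent + Vᵀ(F* − F) ≥ −Gᵀ G. -/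
open Matrix Real

/-- The diagonal matrix `Λ = diag(λᵢ)`. -/
noncomputable def lamMat {n : ℕ} (lam : Fin n → ℝ) : Matrix (Fin n) (Fin n) ℝ :=
  Matrix.diagonal lam

/-- The entrywise square root `√|Λ⁻| = diag(√(−min(λᵢ,0)))`. -/
noncomputable def sqrtAbsLamMinus {n : ℕ} (lam : Fin n → ℝ) : Matrix (Fin n) (Fin n) ℝ :=
  Matrix.diagonal (fun i => Real.sqrt (-(min (lam i) 0)))

/-- The indicator matrix `I⁻ = diag(if λᵢ < 0 then 1 else 0)`. -/
noncomputable def indMinus {n : ℕ} (lam : Fin n → ℝ) : Matrix (Fin n) (Fin n) ℝ :=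
  Matrix.diagonal (fun i => if lam i < 0 then (1 : ℝ) else 0)

/-! `I⁻` is absorbed by `S = √|Λ⁻|`, whose entries vanish where `λᵢ ≥ 0`, so with `W = Tᵀ U` the
boundary term is `Wᵀ Λ W + 2 (S W)ᵀ (S W - G)`. Since `λᵢ + sᵢ² = max(λᵢ, 0) ≥ 0`, its `i`-th summand
is `(λᵢ + sᵢ²) Wᵢ² + (sᵢ Wᵢ - Gᵢ)² - Gᵢ² ≥ -Gᵢ²`. -/

theorem neg_mul_self_le_of_nonneg_add_mul_self {l d : ℝ} (h : 0 ≤ l + d * d) (w g : ℝ) :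
    -(g * g) ≤ w * (l * w) + 2 * (w * (d * (d * w - g))) := by
  nlinarith [mul_nonneg h (mul_self_nonneg w), mul_self_nonneg (d * w - g)]

theorem neg_dotProduct_self_le_of_nonneg_add_mul_self {ι : Type*} [Fintype ι] [DecidableEq ι]
    {l d : ι → ℝ} (h : ∀ i, 0 ≤ l i + d i * d i) (w g : ι → ℝ) :
    -(g ⬝ᵥ g) ≤ w ⬝ᵥ diagonal l *ᵥ w + 2 * (w ⬝ᵥ diagonal d *ᵥ (diagonal d *ᵥ w - g)) := by
  simp only [mulVec_diagonal, dotProduct, Pi.sub_apply, Finset.mul_sum,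
    ← Finset.sum_add_distrib, ← Finset.sum_neg_distrib]
  exact Finset.sum_le_sum fun i _ => neg_mul_self_le_of_nonneg_add_mul_self (h i) (w i) (g i)

theorem dotProduct_mul_mulVec {ι α : Type*} [Fintype ι] [CommSemiring α] (T M : Matrix ι ι α)
    (u x : ι → α) :
    u ⬝ᵥ (T * M) *ᵥ x = (Tᵀ *ᵥ u) ⬝ᵥ M *ᵥ x := by
  rw [← mulVec_mulVec, dotProduct_mulVec, ← mulVec_transpose]

theorem sqrt_neg_min_zero_eq_zero_of_nonneg {x : ℝ} (hx : 0 ≤ x) : √(-min x 0) = 0 := by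
  simp [min_eq_right hx]

theorem nonneg_add_sqrt_neg_min_zero_mul_self (x : ℝ) : 0 ≤ x + √(-min x 0) * √(-min x 0) := by
  rw [mul_self_sqrt (neg_nonneg.mpr (min_le_right x 0))]
  rcases le_total x 0 with hx | hx <;> simp [hx]

section

variable {n : ℕ} (lam : Fin n → ℝ)

theorem indMinus_mul_sqrtAbsLamMinus : indMinus lam * sqrtAbsLamMinus lam = sqrtAbsLamMinus lam := by
  simp only [indMinus, sqrtAbsLamMinus, diagonal_mul_diagonal]
  congr 1
  ext i
  split_ifs with h
  · exact one_mul _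
  · rw [sqrt_neg_min_zero_eq_zero_of_nonneg (not_lt.mp h), mul_zero]

theorem sqrtAbsLamMinus_mul_indMinus : sqrtAbsLamMinus lam * indMinus lam = sqrtAbsLamMinus lam := by
  rw [sqrtAbsLamMinus, indMinus, (commute_diagonal _ _).eq, ← indMinus, ← sqrtAbsLamMinus,
    indMinus_mul_sqrtAbsLamMinus]

end

/-- Pointwise version of Theorem 2 of the paper: any numerical boundary flux `F*`
satisfying `Vᵀ(F* − F) = Uᵀ(2 T I⁻ √|Λ⁻| (√|Λ⁻| W⁻ − G))` yields a boundary term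
`Wᵀ Λ W + Vᵀ(F* − F)` bounded below solely by the data `G`; in particular for the
entropy flux `F^ent = Wᵀ Λ W`. -/
theorem flux_boundary_bound (n m : ℕ) (lam : Fin n → ℝ) (T : Matrix (Fin n) (Fin n) ℝ)
    (U G : Fin n → ℝ) (V Fstar F : Fin m → ℝ)
    (hrel :
      V ⬝ᵥ (Fstar - F) =
        U ⬝ᵥ ((2 : ℝ) • (T * indMinus lam * sqrtAbsLamMinus lam)).mulVec
          ((sqrtAbsLamMinus lam).mulVec ((indMinus lam).mulVec (Tᵀ.mulVec U)) - G)) :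
    (Tᵀ.mulVec U) ⬝ᵥ (lamMat lam).mulVec (Tᵀ.mulVec U) + V ⬝ᵥ (Fstar - F)
        ≥ -(G ⬝ᵥ G) ∧
      ∀ Fent : ℝ, Fent = (Tᵀ.mulVec U) ⬝ᵥ (lamMat lam).mulVec (Tᵀ.mulVec U) →
        Fent + V ⬝ᵥ (Fstar - F) ≥ -(G ⬝ᵥ G) := by
  have key : (Tᵀ.mulVec U) ⬝ᵥ (lamMat lam).mulVec (Tᵀ.mulVec U) + V ⬝ᵥ (Fstar - F)
      ≥ -(G ⬝ᵥ G) := by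
    rw [hrel, smul_mulVec, dotProduct_smul, smul_eq_mul, Matrix.mul_assoc,
      indMinus_mul_sqrtAbsLamMinus, dotProduct_mul_mulVec, mulVec_mulVec _ (sqrtAbsLamMinus lam),
      sqrtAbsLamMinus_mul_indMinus]
    exact neg_dotProduct_self_le_of_nonneg_add_mul_self
      (fun i => nonneg_add_sqrt_neg_min_zero_mul_self (lam i)) _ G
  exact ⟨key, fun Fent hF => hF ▸ key⟩
end

section
/- Let u > 0 and u_ext ∈ ℝ. Define the numerical boundary flux F* = (1/3)(2 u_ext √(|u_ext| u) − u²/2) and the data G = √(|u_ext|/3)·u_ext. Then the boundary term satisfies BT := u³/3 + u(F* − u²/2) = G² − (√(u/3)·u − G)², and hence BT ≤ G² = |u_ext| u_ext²/3. -/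
/-!
Since `u³/3 − u · u²/2 = −u³/6`, the boundary term is
`u F* − u³/6 = (2/3) u u_ext √(|u_ext| u) − u³/3`. The flux `F*` is chosen so that this is
exactly `2 (√(u/3) u) G − (√(u/3) u)²`, because `√(u/3) √(|u_ext|/3) = √(|u_ext| u) / 3`;
completing the square gives `G² − (√(u/3) u − G)²`.
-/

open Real

noncomputable section

namespace Burgers

def boundaryTerm (u Fstar : ℝ) : ℝ := u ^ 3 / 3 + u * (Fstar - u ^ 2 / 2)

def newBoundaryFlux (u uext : ℝ) : ℝ := (1 / 3) * (2 * uext * √(|uext| * u) - u ^ 2 / 2)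

def boundaryData (uext : ℝ) : ℝ := √(|uext| / 3) * uext

lemma sqrt_div_mul_sqrt_div {x c : ℝ} (hx : 0 ≤ x) (hc : 0 ≤ c) (y : ℝ) :
    √(x / c) * √(y / c) = √(x * y) / c := by
  rw [← sqrt_mul (div_nonneg hx hc), div_mul_div_comm, sqrt_div' _ (mul_nonneg hc hc),
    sqrt_mul_self hc]

lemma boundaryData_sq (uext : ℝ) : boundaryData uext ^ 2 = |uext| * uext ^ 2 / 3 := by
  rw [boundaryData, mul_pow, sq_sqrt (by positivity)]
  ring

lemma boundaryTerm_newBoundaryFlux {u : ℝ} (hu : 0 ≤ u) (uext : ℝ) :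
    boundaryTerm u (newBoundaryFlux u uext) =
      boundaryData uext ^ 2 - (√(u / 3) * u - boundaryData uext) ^ 2 := by
  have hroot : √(u / 3) * √(|uext| / 3) = √(|uext| * u) / 3 := by
    rw [sqrt_div_mul_sqrt_div hu zero_le_three, mul_comm]
  have hsq : √(u / 3) ^ 2 = u / 3 := sq_sqrt (by positivity)
  unfold boundaryTerm newBoundaryFlux boundaryData
  linear_combination u ^ 2 * hsq - 2 * u * uext * hroot

lemma boundaryTerm_newBoundaryFlux_le {u : ℝ} (hu : 0 ≤ u) (uext : ℝ) :
    boundaryTerm u (newBoundaryFlux u uext) ≤ boundaryData uext ^ 2 := by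
  rw [boundaryTerm_newBoundaryFlux hu]
  exact sub_le_self _ (sq_nonneg _)

end Burgers

end

/-- The new nonlinearly stable Burgers boundary flux
`F* = (1/3)(2 u_ext √(|u_ext| u) − u²/2)` gives a boundary term
`BT = u³/3 + u(F* − u²/2) = G² − (√(u/3)·u − G)² ≤ G² = |u_ext| u_ext²/3`
with data `G = √(|u_ext|/3)·u_ext`. -/
theorem burgers_new_flux_bound (u uext : ℝ) (hu : 0 < u) :
    let Fstar := (1 / 3) * (2 * uext * Real.sqrt (|uext| * u) - u ^ 2 / 2)
    let G := Real.sqrt (|uext| / 3) * uext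
    let BT := u ^ 3 / 3 + u * (Fstar - u ^ 2 / 2)
    BT = G ^ 2 - (Real.sqrt (u / 3) * u - G) ^ 2 ∧
      BT ≤ G ^ 2 ∧ G ^ 2 = |uext| * uext ^ 2 / 3 :=
  ⟨Burgers.boundaryTerm_newBoundaryFlux hu.le uext,
    Burgers.boundaryTerm_newBoundaryFlux_le hu.le uext, Burgers.boundaryData_sq uext⟩
end

section
/- Let u > 0 and u_ext ∈ ℝ, and let F*_EC = (u_ext² + u·u_ext + u²)/6 be the entropy conservative two-point flux. Then the boundary term satisfies BT := u³/3 + u(F*_EC − u²/2) = (u·u_ext² + u²·u_ext)/6. Moreover, if u_ext < 0 then this boundary term is not bounded below in u: for every C ∈ ℝ there exists u > 0 with (u·u_ext² + u²·u_ext)/6 < C. -/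
/-! The boundary term factors as `u * (u_ext² / 6 + (u_ext / 6) * u)`. For `u_ext < 0` the second
factor is affine with negative slope, so the product tends to `-∞` as `u → ∞`. -/

open Filter

theorem burgers_ec_boundary_term (u uext : ℝ) :
    u ^ 3 / 3 + u * ((uext ^ 2 + u * uext + u ^ 2) / 6 - u ^ 2 / 2) =
      (u * uext ^ 2 + u ^ 2 * uext) / 6 := by
  ring

theorem tendsto_mul_affine_atBot_of_neg {α : Type*} [Field α] [LinearOrder α]
    [IsStrictOrderedRing α] (a : α) {c : α} (hc : c < 0) :
    Tendsto (fun x : α => x * (a + c * x)) atTop atBot :=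
  tendsto_id.atTop_mul_atBot₀ <|
    tendsto_atBot_add_const_left _ a (tendsto_id.const_mul_atTop_of_neg hc)

theorem exists_pos_mul_affine_lt_of_neg {α : Type*} [Field α] [LinearOrder α]
    [IsStrictOrderedRing α] (a : α) {c : α} (hc : c < 0) (C : α) :
    ∃ x : α, 0 < x ∧ x * (a + c * x) < C :=
  ((eventually_gt_atTop 0).and
    ((tendsto_mul_affine_atBot_of_neg a hc).eventually (eventually_lt_atBot C))).exists

theorem burgers_ec_flux_unbounded_general (u uext : ℝ) :
    (u ^ 3 / 3 + u * ((uext ^ 2 + u * uext + u ^ 2) / 6 - u ^ 2 / 2) =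
      (u * uext ^ 2 + u ^ 2 * uext) / 6) ∧
    (uext < 0 → ∀ C : ℝ, ∃ u' : ℝ, 0 < u' ∧
      (u' * uext ^ 2 + u' ^ 2 * uext) / 6 < C) := by
  refine ⟨burgers_ec_boundary_term u uext, fun hneg C => ?_⟩
  have hslope : uext / 6 < 0 := div_neg_of_neg_of_pos hneg (by norm_num)
  obtain ⟨u', hu', hlt⟩ := exists_pos_mul_affine_lt_of_neg (uext ^ 2 / 6) hslope C
  exact ⟨u', hu', lt_of_eq_of_lt (by ring) hlt⟩

/-- Using the entropy conservative two-point flux at an open Burgers boundary gives a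
boundary term `(u·u_ext² + u²·u_ext)/6` that is not bounded below independently of
the interior state `u` when `u_ext < 0`. -/
theorem burgers_ec_flux_unbounded (u uext : ℝ) (hu : 0 < u) :
    (u ^ 3 / 3 + u * ((uext ^ 2 + u * uext + u ^ 2) / 6 - u ^ 2 / 2) =
      (u * uext ^ 2 + u ^ 2 * uext) / 6) ∧
    (uext < 0 → ∀ C : ℝ, ∃ u' : ℝ, 0 < u' ∧
      (u' * uext ^ 2 + u' ^ 2 * uext) / 6 < C) :=
  burgers_ec_flux_unbounded_general u uext
end

section
/- Let g > 0, h > 0, v1, v2 ∈ ℝ, and let (n1, n2) satisfy n1² + n2² = 1. Set c = √(g h), v_n = n1 v1 + n2 v2, v_τ = −n2 v1 + n1 v2, and U = (1/√(2g))·(g h, c v_n, c v_τ) ∈ ℝ³. Then for every β ∈ ℝ, with boundary matrix A = [[2β v_n, (1−β) c, 0], [(1−β) c, v_n, 0], [0, 0, v_n]], the quadratic form equals the normal entropy flux: Uᵀ A U = (h v_n/2)(v1² + v2²) + g h² v_n = F_n^ent, independently of β. -/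
open Matrix Real

/-!
Writing `U = (1/√(2g)) • w` with `w = (g h, c v_n, c v_τ)`, the `β`-dependent part of `wᵀ A w`
is `2 β (g h) (v_n (g h) - c (c v_n))`, which vanishes because `c² = g h`. What remains is
`2 g² h² v_n + g h v_n (v_n² + v_τ²)`, and `v_n² + v_τ² = v1² + v2²` since `(n1, n2)` is a unit
vector; dividing by `2 g` gives the entropy flux.
-/

lemma normal_sq_add_tangential_sq (n1 n2 v1 v2 : ℝ) :
    (n1 * v1 + n2 * v2) ^ 2 + (-n2 * v1 + n1 * v2) ^ 2 =
      (n1 ^ 2 + n2 ^ 2) * (v1 ^ 2 + v2 ^ 2) := by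
  ring

lemma dotProduct_boundaryMatrix_mulVec (β c vn a b d : ℝ) :
    ![a, b, d] ⬝ᵥ !![2 * β * vn, (1 - β) * c, 0; (1 - β) * c, vn, 0; 0, 0, vn] *ᵥ ![a, b, d] =
      2 * β * a * (vn * a - c * b) + 2 * c * a * b + vn * (b ^ 2 + d ^ 2) := by
  simp only [dotProduct, mulVec, Fin.sum_univ_three, of_apply, cons_val', cons_val_zero,
    cons_val_one, cons_val_two, empty_val', cons_val_fin_one, head_cons, tail_cons, head_fin_const]
  ring

lemma dotProduct_boundaryMatrix_mulVec_state (β g h c vn vτ : ℝ) (hc : c ^ 2 = g * h) :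
    ![g * h, c * vn, c * vτ] ⬝ᵥ
        !![2 * β * vn, (1 - β) * c, 0; (1 - β) * c, vn, 0; 0, 0, vn] *ᵥ ![g * h, c * vn, c * vτ] =
      2 * g * (h * vn / 2 * (vn ^ 2 + vτ ^ 2) + g * h ^ 2 * vn) := by
  have hβ : vn * (g * h) - c * (c * vn) = 0 := by linear_combination (-vn) * hc
  rw [dotProduct_boundaryMatrix_mulVec, hβ]
  linear_combination (2 * g * h * vn + vn * (vn ^ 2 + vτ ^ 2)) * hc

/-- The one-parameter family of boundary matrices of the skew-symmetric shallow
water formulation reproduces the normal entropy flux as a quadratic form: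
`Uᵀ A U = (h v_n/2)(v1² + v2²) + g h² v_n`, independently of `β`. -/
theorem swe_boundary_matrix_quadratic_form (g h v1 v2 n1 n2 c vn vτ : ℝ)
    (hg : 0 < g) (hh : 0 < h) (hn : n1 ^ 2 + n2 ^ 2 = 1)
    (hc : c = Real.sqrt (g * h))
    (hvn : vn = n1 * v1 + n2 * v2) (hvτ : vτ = -n2 * v1 + n1 * v2) :
    ∀ β : ℝ,
      let U : Fin 3 → ℝ := (1 / Real.sqrt (2 * g)) • ![g * h, c * vn, c * vτ]
      let A : Matrix (Fin 3) (Fin 3) ℝ :=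
        !![2 * β * vn, (1 - β) * c, 0;
           (1 - β) * c, vn, 0;
           0, 0, vn]
      U ⬝ᵥ A.mulVec U = h * vn / 2 * (v1 ^ 2 + v2 ^ 2) + g * h ^ 2 * vn := by
  intro β U A
  have hc2 : c ^ 2 = g * h := hc ▸ sq_sqrt (by positivity)
  have hrot : vn ^ 2 + vτ ^ 2 = v1 ^ 2 + v2 ^ 2 := by
    rw [hvn, hvτ, normal_sq_add_tangential_sq, hn, one_mul]
  have hscale : (1 / √(2 * g)) ^ 2 = 1 / (2 * g) := by
    rw [div_pow, one_pow, sq_sqrt (by positivity)]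
  calc U ⬝ᵥ A *ᵥ U
      = (1 / √(2 * g)) ^ 2 * (![g * h, c * vn, c * vτ] ⬝ᵥ A *ᵥ ![g * h, c * vn, c * vτ]) := by
        simp only [U, mulVec_smul, dotProduct_smul, smul_dotProduct, smul_eq_mul]
        ring
    _ = h * vn / 2 * (v1 ^ 2 + v2 ^ 2) + g * h ^ 2 * vn := by
        rw [dotProduct_boundaryMatrix_mulVec_state β g h c vn vτ hc2, hrot, hscale]
        field_simp
end

section
/- Let α, v_n, c ∈ ℝ, and let T = [[α/√2, 0, α/√2], [−1/√2, 0, 1/√2], [0, 1, 0]] and Λ = diag(v_n − c, v_n, v_n + c). Then T Λ Tᵀ = [[α² v_n, α c, 0], [α c, v_n, 0], [0, 0, v_n]]. Moreover, if α = −1 + √3 and β = 2 − √3, then α² = 2β and α = 1 − β, so that T Λ Tᵀ equals the boundary matrix A = [[2β v_n, (1−β) c, 0], [(1−β) c, v_n, 0], [0, 0, v_n]]. -/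
open Matrix Real

theorem swe_transform_mul_diagonal_mul_transpose (α vn c : ℝ) :
    !![α / √2, 0, α / √2; -(1 / √2), 0, 1 / √2; 0, 1, 0] * diagonal ![vn - c, vn, vn + c] *
        (!![α / √2, 0, α / √2; -(1 / √2), 0, 1 / √2; 0, 1, 0] : Matrix (Fin 3) (Fin 3) ℝ)ᵀ =
      !![α ^ 2 * vn, α * c, 0; α * c, vn, 0; 0, 0, vn] := by
  have h2 : √2 ^ 2 = 2 := sq_sqrt zero_le_two
  ext i j
  fin_cases i <;> fin_cases j <;> simp [mul_apply, vecMul_diagonal, Fin.sum_univ_three] <;>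
    field_simp <;> rw [h2] <;> ring

theorem neg_one_add_sqrt_three_sq : (-1 + √3) ^ 2 = 2 * (2 - √3) := by
  linear_combination (sq_sqrt zero_le_three : √3 ^ 2 = 3)

/-- Congruence transformation for the shallow water boundary matrix:
`T Λ Tᵀ = [[α² v_n, α c, 0], [α c, v_n, 0], [0, 0, v_n]]`; moreover for
`α = −1 + √3` and `β = 2 − √3` one has `α² = 2β`, `α = 1 − β`, and `T Λ Tᵀ = A`. -/
theorem swe_congruence (α vn c : ℝ) :
    let T : Matrix (Fin 3) (Fin 3) ℝ :=
      !![α / Real.sqrt 2, 0, α / Real.sqrt 2;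
         -(1 / Real.sqrt 2), 0, 1 / Real.sqrt 2;
         0, 1, 0]
    let Λ : Matrix (Fin 3) (Fin 3) ℝ := Matrix.diagonal ![vn - c, vn, vn + c]
    T * Λ * Tᵀ = !![α ^ 2 * vn, α * c, 0; α * c, vn, 0; 0, 0, vn] ∧
      (α = -1 + Real.sqrt 3 → ∀ β : ℝ, β = 2 - Real.sqrt 3 →
        α ^ 2 = 2 * β ∧ α = 1 - β ∧
          T * Λ * Tᵀ =
            !![2 * β * vn, (1 - β) * c, 0; (1 - β) * c, vn, 0; 0, 0, vn]) := by
  intro T Λ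
  have hcongr : T * Λ * Tᵀ = !![α ^ 2 * vn, α * c, 0; α * c, vn, 0; 0, 0, vn] :=
    swe_transform_mul_diagonal_mul_transpose α vn c
  refine ⟨hcongr, fun hα β hβ => ?_⟩
  have hsq : α ^ 2 = 2 * β := by rw [hα, hβ]; exact neg_one_add_sqrt_three_sq
  have hlin : α = 1 - β := by rw [hα, hβ]; ring
  exact ⟨hsq, hlin, by rw [hcongr, hsq, hlin]⟩
end

section
/- Subcritical outflow relation. Let g > 0, let the interior state satisfy h > 0 and 0 < v_n < c, and let the exterior state satisfy h_ext > 0 and 0 < v_n^ext < c_ext, with α = −1 + √3. Define I⁻ = diag(1,0,0), |Λ⁻| = diag(c − v_n, 0, 0), |Λ⁻_ext| = diag(c_ext − v_n^ext, 0, 0), W⁻ = I⁻ Tᵀ U, G = √(|Λ⁻_ext|) · I⁻ Tᵀ U_ext, λ̄₁ = √((c − v_n)(c_ext − v_n^ext)), and the flux F* ∈ ℝ³ with components F*₁ = (α/2) h v_n + (1−α) h c + (α/(2g)) c v_n² − (α/(2g)) λ̄₁ c_ext (α c_ext − v_n^ext); F*₂ = (α/4 + 1/2) h v1 v_n + ((1−α)/2)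 h c v1 + (α/(4g)) c v1 v_n² + (1−α)(g h²/2) n1 + (h v_n/2)((1+α)c − v_n) n1 − (1/(4g)) λ̄₁ c_ext (α c_ext − v_n^ext)(α v1 − 2 c n1); F*₃ = the same expression with v1 replaced by v2 and n1 replaced by n2. Then Mᵀ (F* − F_n) = 2 Nᵀ S T I⁻ √(|Λ⁻|) (√(|Λ⁻|) W⁻ − G). -/
/-!
Only the first characteristic field is incoming, so `I⁻` and `√|Λ⁻|` cut the right-hand side
down to the first column of `Nᵀ S T`, which is `(g α, -c n₁, -c n₂) / (2 √g)`, times twice the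
jump `(c - v_n) w₁ - λ̄₁ w₁ᵉˣᵗ` of the first characteristic variable `w₁ = (α g h - c v_n) / (2 √g)`.
On the left, `F* - F_n` is that same multiple of the preimage of this column under `Mᵀ`: with
`g h = c²`, the interior part of `F* - F_n` carries the factor `(c - v_n) c (α c - v_n)` because
`α = √3 - 1` is a root of `α² + 2 α - 2`.
-/

open Matrix Real

namespace ShallowWater

theorem mul_diagonal_first_mul_diagonal_first_mulVec {R : Type*} [CommSemiring R]
    (A : Matrix (Fin 3) (Fin 3) R) (a : R) (x : Fin 3 → R) :
    (A * diagonal ![1, 0, 0] * diagonal ![a, 0, 0]) *ᵥ x = (a * x 0) • fun i => A i 0 := by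
  ext i
  simp [mulVec, dotProduct, Fin.sum_univ_three, mul_comm, mul_left_comm]

theorem col_zero_transpose_rotation_mul_scaling_mul_transform (n1 n2 g c α s : ℝ) :
    (fun i => (!![1, 0, 0; 0, n1, n2; 0, -n2, n1]ᵀ * (s • diagonal ![g, c, c]) *
      !![α / √2, 0, α / √2; -(1 / √2), 0, 1 / √2; 0, 1, 0]) i 0 : Fin 3 → ℝ) =
      (s / √2) • ![g * α, -c * n1, -c * n2] := by
  ext i
  fin_cases i <;> simp [Matrix.mul_apply, Fin.sum_univ_three] <;> ring

theorem transpose_transform_mulVec_smul_zero (α s a b d : ℝ) :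
    (!![α / √2, 0, α / √2; -(1 / √2), 0, 1 / √2; 0, 1, 0]ᵀ *ᵥ (s • ![a, b, d])) 0 =
      s / √2 * (α * a - b) := by
  simp [mulVec, dotProduct, Fin.sum_univ_three]
  ring

theorem subcritical_sat_eq (g h hext c vn vτ cext vne vte α n1 n2 : ℝ) (hg : 0 ≤ g)
    (hcv : 0 ≤ c - vn) :
    let T : Matrix (Fin 3) (Fin 3) ℝ :=
      !![α / √2, 0, α / √2; -(1 / √2), 0, 1 / √2; 0, 1, 0]
    let sqrtΛ : Matrix (Fin 3) (Fin 3) ℝ := diagonal ![√(c - vn), 0, 0]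
    let U : Fin 3 → ℝ := (1 / √(2 * g)) • ![g * h, c * vn, c * vτ]
    let Uext : Fin 3 → ℝ := (1 / √(2 * g)) • ![g * hext, cext * vne, cext * vte]
    (2 : ℝ) • (!![1, 0, 0; 0, n1, n2; 0, -n2, n1]ᵀ * ((1 / √(2 * g)) • diagonal ![g, c, c]) *
        T * diagonal ![1, 0, 0] * sqrtΛ) *ᵥ
      (sqrtΛ *ᵥ (diagonal ![1, 0, 0] *ᵥ (Tᵀ *ᵥ U)) -
        diagonal ![√(cext - vne), 0, 0] *ᵥ (diagonal ![1, 0, 0] *ᵥ (Tᵀ *ᵥ Uext))) =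
      (((c - vn) * (α * (g * h) - c * vn) -
          √((c - vn) * (cext - vne)) * (α * (g * hext) - cext * vne)) / (2 * g)) •
        ![g * α, -c * n1, -c * n2] := by
  intro T sqrtΛ U Uext
  have hκ : (1 / √(2 * g) / √2) ^ 2 = 1 / (4 * g) := by
    rw [div_pow, div_pow, sq_sqrt (by positivity), sq_sqrt (by positivity)]
    ring
  rw [mul_diagonal_first_mul_diagonal_first_mulVec,
    col_zero_transpose_rotation_mul_scaling_mul_transform, smul_smul, smul_smul]
  congr 1
  simp only [Pi.sub_apply, mulVec_diagonal, transpose_transform_mulVec_smul_zero, cons_val_zero,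
    T, U, Uext, sqrtΛ]
  rw [sqrt_mul hcv]
  linear_combination
    2 * (√(c - vn) ^ 2 * (α * (g * h) - c * vn) -
      √(c - vn) * √(cext - vne) * (α * (g * hext) - cext * vne)) * hκ +
    (α * (g * h) - c * vn) / (2 * g) * sq_sqrt hcv

theorem transpose_mulVec_outflowFlux_sub_normalFlux
    (g h v1 v2 n1 n2 c vn α lam cext vne : ℝ) (hg : g ≠ 0) (hc : c ^ 2 = g * h)
    (hα : α ^ 2 + 2 * α - 2 = 0) :
    !![g, -v1 / 2, -v2 / 2; 0, 1, 0; 0, 0, 1]ᵀ *ᵥ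
      (![α / 2 * h * vn + (1 - α) * h * c + α / (2 * g) * c * vn ^ 2 -
          α / (2 * g) * lam * cext * (α * cext - vne),
        (α / 4 + 1 / 2) * h * v1 * vn + (1 - α) / 2 * h * c * v1 +
          α / (4 * g) * c * v1 * vn ^ 2 + (1 - α) * (g * h ^ 2 / 2) * n1 +
          h * vn / 2 * ((1 + α) * c - vn) * n1 -
          1 / (4 * g) * lam * cext * (α * cext - vne) * (α * v1 - 2 * c * n1),
        (α / 4 + 1 / 2) * h * v2 * vn + (1 - α) / 2 * h * c * v2 +
          α / (4 * g) * c * v2 * vn ^ 2 + (1 - α) * (g * h ^ 2 / 2) * n2 +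
          h * vn / 2 * ((1 + α) * c - vn) * n2 -
          1 / (4 * g) * lam * cext * (α * cext - vne) * (α * v2 - 2 * c * n2)] -
        ![h * vn, h * v1 * vn + g / 2 * h ^ 2 * n1, h * v2 * vn + g / 2 * h ^ 2 * n2]) =
      (((c - vn) * c * (α * c - vn) - lam * cext * (α * cext - vne)) / (2 * g)) •
        ![g * α, -c * n1, -c * n2] := by
  ext i
  fin_cases i <;> simp [mulVec, dotProduct, Fin.sum_univ_three] <;> field_simp
  -- the only component where the choice of `α` matters
  · linear_combination (-(α * vn + 2 * (1 - α) * c - 2 * vn)) * hc + c ^ 2 * (vn - c) * hα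
  · linear_combination 8 * n1 * (α * (c ^ 2 + g * h) - vn * (c * (1 + α) - vn)) * hc
  · linear_combination 8 * n2 * (α * (c ^ 2 + g * h) - vn * (c * (1 + α) - vn)) * hc

end ShallowWater

open ShallowWater

theorem swe_subcritical_outflow_relation_general
    (g h v1 v2 n1 n2 hext c vn vτ cext vne vte α : ℝ)
    (hg : 0 < g) (hh : 0 < h) (hhe : 0 < hext)
    (hc : c = Real.sqrt (g * h))
    (hce : cext = Real.sqrt (g * hext))
    (hsub : 0 < vn ∧ vn < c)
    (hα : α = -1 + Real.sqrt 3) :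
    let T : Matrix (Fin 3) (Fin 3) ℝ :=
      !![α / Real.sqrt 2, 0, α / Real.sqrt 2;
         -(1 / Real.sqrt 2), 0, 1 / Real.sqrt 2;
         0, 1, 0]
    let M : Matrix (Fin 3) (Fin 3) ℝ := !![g, -v1 / 2, -v2 / 2; 0, 1, 0; 0, 0, 1]
    let N : Matrix (Fin 3) (Fin 3) ℝ := !![1, 0, 0; 0, n1, n2; 0, -n2, n1]
    let S : Matrix (Fin 3) (Fin 3) ℝ :=
      (1 / Real.sqrt (2 * g)) • Matrix.diagonal ![g, c, c]
    let Iminus : Matrix (Fin 3) (Fin 3) ℝ := Matrix.diagonal ![1, 0, 0]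
    let sqrtΛ : Matrix (Fin 3) (Fin 3) ℝ :=
      Matrix.diagonal ![Real.sqrt (c - vn), 0, 0]
    let sqrtΛe : Matrix (Fin 3) (Fin 3) ℝ :=
      Matrix.diagonal ![Real.sqrt (cext - vne), 0, 0]
    let U : Fin 3 → ℝ := (1 / Real.sqrt (2 * g)) • ![g * h, c * vn, c * vτ]
    let Uext : Fin 3 → ℝ :=
      (1 / Real.sqrt (2 * g)) • ![g * hext, cext * vne, cext * vte]
    let Wm : Fin 3 → ℝ := Iminus.mulVec (Tᵀ.mulVec U)
    let G : Fin 3 → ℝ := sqrtΛe.mulVec (Iminus.mulVec (Tᵀ.mulVec Uext))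
    let lam1 : ℝ := Real.sqrt ((c - vn) * (cext - vne))
    let Fn : Fin 3 → ℝ :=
      ![h * vn, h * v1 * vn + g / 2 * h ^ 2 * n1, h * v2 * vn + g / 2 * h ^ 2 * n2]
    let Fs : Fin 3 → ℝ :=
      ![α / 2 * h * vn + (1 - α) * h * c + α / (2 * g) * c * vn ^ 2 -
          α / (2 * g) * lam1 * cext * (α * cext - vne),
        (α / 4 + 1 / 2) * h * v1 * vn + (1 - α) / 2 * h * c * v1 +
          α / (4 * g) * c * v1 * vn ^ 2 + (1 - α) * (g * h ^ 2 / 2) * n1 +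
          h * vn / 2 * ((1 + α) * c - vn) * n1 -
          1 / (4 * g) * lam1 * cext * (α * cext - vne) * (α * v1 - 2 * c * n1),
        (α / 4 + 1 / 2) * h * v2 * vn + (1 - α) / 2 * h * c * v2 +
          α / (4 * g) * c * v2 * vn ^ 2 + (1 - α) * (g * h ^ 2 / 2) * n2 +
          h * vn / 2 * ((1 + α) * c - vn) * n2 -
          1 / (4 * g) * lam1 * cext * (α * cext - vne) * (α * v2 - 2 * c * n2)]
    Mᵀ.mulVec (Fs - Fn) =
      (2 : ℝ) • (Nᵀ * S * T * Iminus * sqrtΛ).mulVec (sqrtΛ.mulVec Wm - G) := by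
  intro T M N S Iminus sqrtΛ sqrtΛe U Uext Wm G lam1 Fn Fs
  have hα2 : α ^ 2 + 2 * α - 2 = 0 := by
    rw [hα]
    linear_combination sq_sqrt (zero_le_three (α := ℝ))
  have hc2 : c ^ 2 = g * h := hc ▸ sq_sqrt (by positivity)
  have hce2 : cext ^ 2 = g * hext := hce ▸ sq_sqrt (by positivity)
  calc Mᵀ *ᵥ (Fs - Fn)
      = (((c - vn) * c * (α * c - vn) - lam1 * cext * (α * cext - vne)) / (2 * g)) •
          ![g * α, -c * n1, -c * n2] :=
        transpose_mulVec_outflowFlux_sub_normalFlux g h v1 v2 n1 n2 c vn α lam1 cext vne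
          hg.ne' hc2 hα2
    _ = (((c - vn) * (α * (g * h) - c * vn) - lam1 * (α * (g * hext) - cext * vne)) / (2 * g)) •
          ![g * α, -c * n1, -c * n2] := by
        rw [← hc2, ← hce2]
        ring_nf
    _ = _ := (subcritical_sat_eq g h hext c vn vτ cext vne vte α n1 n2 hg.le
        (sub_nonneg.2 hsub.2.le)).symm

/-- Appendix B.1 of the paper: the subcritical outflow boundary flux satisfies the
flux–SAT relation `Mᵀ (F* − F_n) = 2 Nᵀ S T I⁻ √|Λ⁻| (√|Λ⁻| W⁻ − G)`. -/
theorem swe_subcritical_outflow_relation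
    (g h v1 v2 n1 n2 hext v1e v2e c vn vτ cext vne vte α : ℝ)
    (hg : 0 < g) (hh : 0 < h) (hhe : 0 < hext) (hn : n1 ^ 2 + n2 ^ 2 = 1)
    (hc : c = Real.sqrt (g * h)) (hvn : vn = n1 * v1 + n2 * v2)
    (hvτ : vτ = -n2 * v1 + n1 * v2)
    (hce : cext = Real.sqrt (g * hext)) (hvne : vne = n1 * v1e + n2 * v2e)
    (hvte : vte = -n2 * v1e + n1 * v2e)
    (hsub : 0 < vn ∧ vn < c) (hsube : 0 < vne ∧ vne < cext)
    (hα : α = -1 + Real.sqrt 3) :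
    let T : Matrix (Fin 3) (Fin 3) ℝ :=
      !![α / Real.sqrt 2, 0, α / Real.sqrt 2;
         -(1 / Real.sqrt 2), 0, 1 / Real.sqrt 2;
         0, 1, 0]
    let M : Matrix (Fin 3) (Fin 3) ℝ := !![g, -v1 / 2, -v2 / 2; 0, 1, 0; 0, 0, 1]
    let N : Matrix (Fin 3) (Fin 3) ℝ := !![1, 0, 0; 0, n1, n2; 0, -n2, n1]
    let S : Matrix (Fin 3) (Fin 3) ℝ :=
      (1 / Real.sqrt (2 * g)) • Matrix.diagonal ![g, c, c]
    let Iminus : Matrix (Fin 3) (Fin 3) ℝ := Matrix.diagonal ![1, 0, 0]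
    let sqrtΛ : Matrix (Fin 3) (Fin 3) ℝ :=
      Matrix.diagonal ![Real.sqrt (c - vn), 0, 0]
    let sqrtΛe : Matrix (Fin 3) (Fin 3) ℝ :=
      Matrix.diagonal ![Real.sqrt (cext - vne), 0, 0]
    let U : Fin 3 → ℝ := (1 / Real.sqrt (2 * g)) • ![g * h, c * vn, c * vτ]
    let Uext : Fin 3 → ℝ :=
      (1 / Real.sqrt (2 * g)) • ![g * hext, cext * vne, cext * vte]
    let Wm : Fin 3 → ℝ := Iminus.mulVec (Tᵀ.mulVec U)
    let G : Fin 3 → ℝ := sqrtΛe.mulVec (Iminus.mulVec (Tᵀ.mulVec Uext))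
    let lam1 : ℝ := Real.sqrt ((c - vn) * (cext - vne))
    let Fn : Fin 3 → ℝ :=
      ![h * vn, h * v1 * vn + g / 2 * h ^ 2 * n1, h * v2 * vn + g / 2 * h ^ 2 * n2]
    let Fs : Fin 3 → ℝ :=
      ![α / 2 * h * vn + (1 - α) * h * c + α / (2 * g) * c * vn ^ 2 -
          α / (2 * g) * lam1 * cext * (α * cext - vne),
        (α / 4 + 1 / 2) * h * v1 * vn + (1 - α) / 2 * h * c * v1 +
          α / (4 * g) * c * v1 * vn ^ 2 + (1 - α) * (g * h ^ 2 / 2) * n1 +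
          h * vn / 2 * ((1 + α) * c - vn) * n1 -
          1 / (4 * g) * lam1 * cext * (α * cext - vne) * (α * v1 - 2 * c * n1),
        (α / 4 + 1 / 2) * h * v2 * vn + (1 - α) / 2 * h * c * v2 +
          α / (4 * g) * c * v2 * vn ^ 2 + (1 - α) * (g * h ^ 2 / 2) * n2 +
          h * vn / 2 * ((1 + α) * c - vn) * n2 -
          1 / (4 * g) * lam1 * cext * (α * cext - vne) * (α * v2 - 2 * c * n2)]
    Mᵀ.mulVec (Fs - Fn) =
      (2 : ℝ) • (Nᵀ * S * T * Iminus * sqrtΛ).mulVec (sqrtΛ.mulVec Wm - G) :=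
  swe_subcritical_outflow_relation_general g h v1 v2 n1 n2 hext c vn vτ cext vne vte α hg hh hhe hc
    hce hsub hα
end

section
/- Consistency of the subcritical outflow flux. Let g > 0, h > 0, v1, v2 ∈ ℝ with unit normal n1² + n2² = 1, c = √(g h), v_n = n1 v1 + n2 v2, and assume 0 < v_n < c. Let α = −1 + √3 (so α² + 2α = 2). When the external state equals the internal state (h_ext = h, v1_ext = v1, v2_ext = v2, hence c_ext = c, v_n^ext = v_n, λ̄₁ = c − v_n), the subcritical outflow flux F* with components F*₁ = (α/2) h v_n + (1−α) h c + (α/(2g)) c v_n² − (α/(2g)) (c − v_n) c (α c − v_n); F*₂ = (α/4 + 1/2) h v1 v_n + ((1−α)/2) h c v1 + (α/(4g)) c v1 v_n² + (1−α)(g h²/2) n1 + (h v_n/2)((1+α)c − v_n) n1 − (1/(4g)) (c − v_n) c (α c − v_n)(α v1 − 2 c n1); F*₃ = the same with (v1, n1) replaced by (v2, n2); equals the normal flux: F* = (h v_n, h v1 v_n + (g/2) h² n1, h v2 v_n + (g/2) h² n2). -/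
/-!
Eliminating the water height through `h = c² / g` makes `g` cancel from every component. The
pressure terms then cancel identically, and what is left of each component differs from the
normal flux by a multiple of `α² + 2α - 2`.
-/

open Real

section SubcriticalOutflowFlux

variable {K : Type*} [Field K] [CharZero K]

def subcriticalOutflowMassFlux (g h vn c α : K) : K :=
  α / 2 * h * vn + (1 - α) * h * c + α / (2 * g) * c * vn ^ 2 -
    α / (2 * g) * (c - vn) * c * (α * c - vn)

def subcriticalOutflowMomentumFlux (g h v n vn c α : K) : K :=
  (α / 4 + 1 / 2) * h * v * vn + (1 - α) / 2 * h * c * v +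
    α / (4 * g) * c * v * vn ^ 2 + (1 - α) * (g * h ^ 2 / 2) * n +
    h * vn / 2 * ((1 + α) * c - vn) * n -
    1 / (4 * g) * (c - vn) * c * (α * c - vn) * (α * v - 2 * c * n)

variable {g h vn c α : K}

theorem subcriticalOutflowMassFlux_eq (hg : g ≠ 0) (hc : c ^ 2 = g * h)
    (hα : α ^ 2 + 2 * α = 2) : subcriticalOutflowMassFlux g h vn c α = h * vn := by
  obtain rfl : h = c ^ 2 / g := by rw [hc, mul_div_cancel_left₀ h hg]
  unfold subcriticalOutflowMassFlux
  field_simp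
  linear_combination c ^ 2 * (vn - c) * hα

theorem subcriticalOutflowMomentumFlux_eq (v n : K) (hg : g ≠ 0) (hc : c ^ 2 = g * h)
    (hα : α ^ 2 + 2 * α = 2) :
    subcriticalOutflowMomentumFlux g h v n vn c α = h * v * vn + g / 2 * h ^ 2 * n := by
  obtain rfl : h = c ^ 2 / g := by rw [hc, mul_div_cancel_left₀ h hg]
  unfold subcriticalOutflowMomentumFlux
  field_simp
  linear_combination 2 * c ^ 2 * v * (vn - c) * hα

end SubcriticalOutflowFlux

theorem neg_one_add_sqrt_three_sq_add_two_mul :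
    (-1 + √3) ^ 2 + 2 * (-1 + √3) = 2 := by
  linear_combination Real.sq_sqrt (show (0 : ℝ) ≤ 3 by norm_num)

theorem swe_subcritical_outflow_consistent_general (g h v1 v2 n1 n2 c vn α : ℝ)
    (hg : 0 < g) (hh : 0 < h)
    (hc : c = Real.sqrt (g * h)) (hα : α = -1 + Real.sqrt 3) :
    let Fs : Fin 3 → ℝ :=
      ![α / 2 * h * vn + (1 - α) * h * c + α / (2 * g) * c * vn ^ 2 -
          α / (2 * g) * (c - vn) * c * (α * c - vn),
        (α / 4 + 1 / 2) * h * v1 * vn + (1 - α) / 2 * h * c * v1 +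
          α / (4 * g) * c * v1 * vn ^ 2 + (1 - α) * (g * h ^ 2 / 2) * n1 +
          h * vn / 2 * ((1 + α) * c - vn) * n1 -
          1 / (4 * g) * (c - vn) * c * (α * c - vn) * (α * v1 - 2 * c * n1),
        (α / 4 + 1 / 2) * h * v2 * vn + (1 - α) / 2 * h * c * v2 +
          α / (4 * g) * c * v2 * vn ^ 2 + (1 - α) * (g * h ^ 2 / 2) * n2 +
          h * vn / 2 * ((1 + α) * c - vn) * n2 -
          1 / (4 * g) * (c - vn) * c * (α * c - vn) * (α * v2 - 2 * c * n2)]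
    Fs = ![h * vn, h * v1 * vn + g / 2 * h ^ 2 * n1,
           h * v2 * vn + g / 2 * h ^ 2 * n2] := by
  intro Fs
  have hc2 : c ^ 2 = g * h := by rw [hc, Real.sq_sqrt (mul_nonneg hg.le hh.le)]
  have hα2 : α ^ 2 + 2 * α = 2 := hα ▸ neg_one_add_sqrt_three_sq_add_two_mul
  ext i
  fin_cases i
  exacts [subcriticalOutflowMassFlux_eq hg.ne' hc2 hα2,
    subcriticalOutflowMomentumFlux_eq v1 n1 hg.ne' hc2 hα2,
    subcriticalOutflowMomentumFlux_eq v2 n2 hg.ne' hc2 hα2]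

/-- Consistency of the subcritical outflow flux: when the external state equals the
internal state, the subcritical outflow boundary flux equals the normal flux. -/
theorem swe_subcritical_outflow_consistent (g h v1 v2 n1 n2 c vn α : ℝ)
    (hg : 0 < g) (hh : 0 < h) (hn : n1 ^ 2 + n2 ^ 2 = 1)
    (hc : c = Real.sqrt (g * h)) (hvn : vn = n1 * v1 + n2 * v2)
    (hsub : 0 < vn ∧ vn < c) (hα : α = -1 + Real.sqrt 3) :
    let Fs : Fin 3 → ℝ :=
      ![α / 2 * h * vn + (1 - α) * h * c + α / (2 * g) * c * vn ^ 2 -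
          α / (2 * g) * (c - vn) * c * (α * c - vn),
        (α / 4 + 1 / 2) * h * v1 * vn + (1 - α) / 2 * h * c * v1 +
          α / (4 * g) * c * v1 * vn ^ 2 + (1 - α) * (g * h ^ 2 / 2) * n1 +
          h * vn / 2 * ((1 + α) * c - vn) * n1 -
          1 / (4 * g) * (c - vn) * c * (α * c - vn) * (α * v1 - 2 * c * n1),
        (α / 4 + 1 / 2) * h * v2 * vn + (1 - α) / 2 * h * c * v2 +
          α / (4 * g) * c * v2 * vn ^ 2 + (1 - α) * (g * h ^ 2 / 2) * n2 +
          h * vn / 2 * ((1 + α) * c - vn) * n2 -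
          1 / (4 * g) * (c - vn) * c * (α * c - vn) * (α * v2 - 2 * c * n2)]
    Fs = ![h * vn, h * v1 * vn + g / 2 * h ^ 2 * n1,
           h * v2 * vn + g / 2 * h ^ 2 * n2] :=
  swe_subcritical_outflow_consistent_general g h v1 v2 n1 n2 c vn α hg hh hc hα
end

section
/- Consistency of the subcritical inflow flux. Let g > 0, h > 0, v1, v2 ∈ ℝ with unit normal n1² + n2² = 1, c = √(g h), v_n = n1 v1 + n2 v2, v_τ = −n2 v1 + n1 v2, and assume −c < v_n < 0. Let α = −1 + √3 (so α² + 2α = 2). When the external state equals the internal state (so c_ext = c, v_n^ext = v_n, v_τ^ext = v_τ, λ̄₁ = |v_n| + c, λ̄₂ = |v_n|, h̄ = h), the subcritical inflow flux F* with components F*₁ = (α/2) h v_n + (1−α) h c + (α/(2g)) c v_n² − (α/(2g)) (|v_n| + c) c (α c − v_n); F*₂ = (α/4 − 1/2) h v1 v_n + ((1−α)/2) h c v1 + (α/(4g)) c v1 v_n² + (1−α)(g h²/2) n1 + (h v_n/2)((1+α)c + v_n) n1 − (1/(4g)) (|v_n| + c) c (α c − v_n)(α v1 − 2 c n1) + |v_n|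 h v_τ n2; F*₃ = the same with (v1, n1) replaced by (v2, n2) in all terms except the last, and last term −|v_n| h v_τ n1; equals the normal flux: F* = (h v_n, h v1 v_n + (g/2) h² n1, h v2 v_n + (g/2) h² n2). -/
/-!
Put `β = α + α² / 2`, which is `1` by the choice of `α`. Using `c² = g h` and `|vₙ| = -vₙ`, the
first component collapses to `h c (1 - β) + h vₙ β = h vₙ`. In the momentum components the terms
proportional to the velocity `vᵢ` add up to `vᵢ / 2 · (F*₁ - h vₙ) = 0`, and the remaining
pressure terms no longer involve `α`: they sum to `nᵢ (g h² / 2 + h vₙ²)`. Together with the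
tangential term this is the normal flux, once `vᵢ` is written in the normal-tangential frame.
-/

/-- `F*₁`, with the external state equal to the internal one. -/
noncomputable def inflowMassFlux (g h c vn α : ℝ) : ℝ :=
  α / 2 * h * vn + (1 - α) * h * c + α / (2 * g) * c * vn ^ 2 -
    α / (2 * g) * (|vn| + c) * c * (α * c - vn)

/-- `(v, n, m) = (v1, n1, n2)` gives `F*₂` and `(v, n, m) = (v2, n2, -n1)` gives `F*₃`. -/
noncomputable def inflowMomentumFlux (g h c vn vτ α v n m : ℝ) : ℝ :=
  (α / 4 - 1 / 2) * h * v * vn + (1 - α) / 2 * h * c * v +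
    α / (4 * g) * c * v * vn ^ 2 + (1 - α) * (g * h ^ 2 / 2) * n +
    h * vn / 2 * ((1 + α) * c + vn) * n -
    1 / (4 * g) * (|vn| + c) * c * (α * c - vn) * (α * v - 2 * c * n) +
    |vn| * h * vτ * m

section

variable {g h c vn α : ℝ}

theorem inflowMassFlux_eq (hg : g ≠ 0) (hc : c ^ 2 = g * h) (hα : α ^ 2 + 2 * α = 2)
    (hvn : vn ≤ 0) : inflowMassFlux g h c vn α = h * vn := by
  have hβ : α + α ^ 2 / 2 = 1 := by linear_combination hα / 2
  calc inflowMassFlux g h c vn α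
      = h * c * (1 - (α + α ^ 2 / 2)) + h * vn * (α + α ^ 2 / 2) := by
        rw [inflowMassFlux, abs_of_nonpos hvn]
        field_simp
        linear_combination (-(α ^ 2 * c) + α * (1 + α) * vn) * hc
    _ = h * vn := by rw [hβ]; ring

theorem inflowMomentumFlux_eq_add (vτ v n m : ℝ) :
    inflowMomentumFlux g h c vn vτ α v n m =
      v / 2 * (inflowMassFlux g h c vn α - h * vn) +
        n * ((1 - α) * (g * h ^ 2 / 2) + h * vn / 2 * ((1 + α) * c + vn) +
          c ^ 2 / (2 * g) * (|vn| + c) * (α * c - vn)) +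
        |vn| * h * vτ * m := by
  rw [inflowMomentumFlux, inflowMassFlux]
  ring

theorem inflowMomentumFlux_eq {vτ v n m : ℝ} (hg : g ≠ 0) (hc : c ^ 2 = g * h)
    (hα : α ^ 2 + 2 * α = 2) (hvn : vn ≤ 0) (hv : v = n * vn - m * vτ) :
    inflowMomentumFlux g h c vn vτ α v n m = h * v * vn + g / 2 * h ^ 2 * n := by
  have hpressure : (1 - α) * (g * h ^ 2 / 2) + h * vn / 2 * ((1 + α) * c + vn) +
      c ^ 2 / (2 * g) * (|vn| + c) * (α * c - vn) = g * h ^ 2 / 2 + h * vn ^ 2 := by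
    rw [abs_of_nonpos hvn, hc]
    field_simp
    linear_combination h * α * hc
  rw [inflowMomentumFlux_eq_add, inflowMassFlux_eq hg hc hα hvn, hpressure,
    abs_of_nonpos hvn, hv]
  ring

end

/-- Consistency of the subcritical inflow flux: when the external state equals the
internal state, the subcritical inflow boundary flux equals the normal flux. -/
theorem swe_subcritical_inflow_consistent (g h v1 v2 n1 n2 c vn vτ α : ℝ)
    (hg : 0 < g) (hh : 0 < h) (hn : n1 ^ 2 + n2 ^ 2 = 1)
    (hc : c = Real.sqrt (g * h)) (hvn : vn = n1 * v1 + n2 * v2)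
    (hvτ : vτ = -n2 * v1 + n1 * v2)
    (hsub : -c < vn ∧ vn < 0) (hα : α = -1 + Real.sqrt 3) :
    let Fs : Fin 3 → ℝ :=
      ![α / 2 * h * vn + (1 - α) * h * c + α / (2 * g) * c * vn ^ 2 -
          α / (2 * g) * (|vn| + c) * c * (α * c - vn),
        (α / 4 - 1 / 2) * h * v1 * vn + (1 - α) / 2 * h * c * v1 +
          α / (4 * g) * c * v1 * vn ^ 2 + (1 - α) * (g * h ^ 2 / 2) * n1 +
          h * vn / 2 * ((1 + α) * c + vn) * n1 -
          1 / (4 * g) * (|vn| + c) * c * (α * c - vn) * (α * v1 - 2 * c * n1) +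
          |vn| * h * vτ * n2,
        (α / 4 - 1 / 2) * h * v2 * vn + (1 - α) / 2 * h * c * v2 +
          α / (4 * g) * c * v2 * vn ^ 2 + (1 - α) * (g * h ^ 2 / 2) * n2 +
          h * vn / 2 * ((1 + α) * c + vn) * n2 -
          1 / (4 * g) * (|vn| + c) * c * (α * c - vn) * (α * v2 - 2 * c * n2) -
          |vn| * h * vτ * n1]
    Fs = ![h * vn, h * v1 * vn + g / 2 * h ^ 2 * n1,
           h * v2 * vn + g / 2 * h ^ 2 * n2] := by
  have hc2 : c ^ 2 = g * h := by rw [hc, Real.sq_sqrt (by positivity)]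
  have hα2 : α ^ 2 + 2 * α = 2 := by
    linear_combination (Real.sq_sqrt (show (0 : ℝ) ≤ 3 by norm_num) : √3 ^ 2 = 3) + (α + 1 + √3) * hα
  have hvn' : vn ≤ 0 := hsub.2.le
  have hv1 : v1 = n1 * vn - n2 * vτ := by
    linear_combination (-n1) * hvn + n2 * hvτ - v1 * hn
  have hv2 : v2 = n2 * vn - -n1 * vτ := by
    linear_combination (-n2) * hvn - n1 * hvτ - v2 * hn
  have hF3 := inflowMomentumFlux_eq hg.ne' hc2 hα2 hvn' hv2
  rw [inflowMomentumFlux] at hF3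
  intro Fs
  ext i
  fin_cases i <;> dsimp [Fs]
  · exact inflowMassFlux_eq hg.ne' hc2 hα2 hvn'
  · exact inflowMomentumFlux_eq hg.ne' hc2 hα2 hvn' hv1
  · linear_combination hF3
end

section
/- Consistency of the supercritical inflow flux. Let g > 0, h > 0, v1, v2 ∈ ℝ with unit normal n1² + n2² = 1, c = √(g h), v_n = n1 v1 + n2 v2, v_τ = −n2 v1 + n1 v2, and assume v_n < −c. Let α = −1 + √3 (so α² + 2α = 2). When the external state equals the internal state (so c_ext = c, v_n^ext = v_n, v_τ^ext = v_τ, λ̄₁ = |v_n| + c, λ̄₂ = |v_n|, λ̄₃ = |v_n| − c, h̄ = h), the supercritical inflow flux F* with components F*₁ = (α − 1) h v_n − (α/(2g)) (|v_n| + c) c (α c − v_n) − (α/(2g)) (|v_n| − c) c (α c + v_n); F*₂ = (α/2 − 1) h v1 v_n + (1 − 2α)(g h²/2) n1 − (1/(4g)) (|v_n| + c) c (α c − v_n)(α v1 − 2 c n1) − (1/(4g)) (|v_n| − c) c (α c + v_n)(α v1 + 2 c n1) + |v_n| h v_τ n2; F*₃ = the same with (v1, n1) replaced by (v2, n2) in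 all terms except the last, and last term −|v_n| h v_τ n1; equals the normal flux: F* = (h v_n, h v1 v_n + (g/2) h² n1, h v2 v_n + (g/2) h² n2). -/
/-!
Put `w = |vₙ| = -vₙ`, which is where `vₙ < -c` enters. The two wave terms of each component
combine through `(w + c)(αc + w) ± (w - c)(αc - w)`, which equal `2(α + 1)cw` and
`2(w² + αc²)`; after `c² = gh` every coefficient of the flux is a polynomial in `α` that
reduces, by `α² + 2α = 2`, to the one of the normal flux. In the momentum components the
leftover `h n vₙ²` and the tangential term recombine to `h v vₙ` because `v = vₙ n + v_τ n^⊥`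
for a unit normal `n`.
-/

open Real

section InflowFlux

variable {α g h c vn : ℝ}

theorem inflow_wave_sum (hvn : vn ≤ 0) :
    (|vn| + c) * (α * c - vn) + (|vn| - c) * (α * c + vn) = -2 * (α + 1) * c * vn := by
  rw [abs_of_nonpos hvn]; ring

theorem inflow_wave_diff (hvn : vn ≤ 0) :
    (|vn| + c) * (α * c - vn) - (|vn| - c) * (α * c + vn) = 2 * (vn ^ 2 + α * c ^ 2) := by
  rw [abs_of_nonpos hvn]; ring

theorem inflow_mass_flux_eq (hα : α ^ 2 + 2 * α = 2) (hg : g ≠ 0) (hc : c ^ 2 = g * h)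
    (hvn : vn ≤ 0) :
    (α - 1) * h * vn - α / (2 * g) * (|vn| + c) * c * (α * c - vn) -
      α / (2 * g) * (|vn| - c) * c * (α * c + vn) = h * vn := by
  have hch : c ^ 2 / g = h := by rw [hc]; field_simp
  calc _ = (α - 1) * h * vn - α / (2 * g) * c *
          ((|vn| + c) * (α * c - vn) + (|vn| - c) * (α * c + vn)) := by ring
    _ = (α - 1) * h * vn + α * (α + 1) * (c ^ 2 / g) * vn := by
          rw [inflow_wave_sum hvn]; field_simp; ring
    _ = (α ^ 2 + 2 * α - 1) * h * vn := by rw [hch]; ring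
    _ = h * vn := by rw [hα]; ring

theorem inflow_momentum_wave_eq (hα : α ^ 2 + 2 * α = 2) (hg : g ≠ 0) (hc : c ^ 2 = g * h)
    (hvn : vn ≤ 0) (v m : ℝ) :
    (α / 2 - 1) * h * v * vn + (1 - 2 * α) * (g * h ^ 2 / 2) * m -
      1 / (4 * g) * (|vn| + c) * c * (α * c - vn) * (α * v - 2 * c * m) -
      1 / (4 * g) * (|vn| - c) * c * (α * c + vn) * (α * v + 2 * c * m) =
      h * m * vn ^ 2 + g / 2 * h ^ 2 * m := by
  have hch : c ^ 2 / g = h := by rw [hc]; field_simp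
  calc _ = (α / 2 - 1) * h * v * vn + (1 - 2 * α) * (g * h ^ 2 / 2) * m -
          c / (4 * g) * (α * v * ((|vn| + c) * (α * c - vn) + (|vn| - c) * (α * c + vn)) -
            2 * c * m * ((|vn| + c) * (α * c - vn) - (|vn| - c) * (α * c + vn))) := by ring
    _ = (α / 2 - 1) * h * v * vn + (1 - 2 * α) * (g * h ^ 2 / 2) * m +
          (c ^ 2 / g) * (α * (α + 1) / 2 * v * vn + m * (vn ^ 2 + α * c ^ 2)) := by
          rw [inflow_wave_sum hvn, inflow_wave_diff hvn]; field_simp; ring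
    _ = ((α ^ 2 + 2 * α) / 2 - 1) * h * v * vn + h * m * vn ^ 2 + g / 2 * h ^ 2 * m := by
          rw [hch, hc]; ring
    _ = h * m * vn ^ 2 + g / 2 * h ^ 2 * m := by rw [hα]; ring

end InflowFlux

theorem unit_normal_recompose_fst {n1 n2 : ℝ} (hn : n1 ^ 2 + n2 ^ 2 = 1) (v1 v2 : ℝ) :
    n1 * (n1 * v1 + n2 * v2) - n2 * (-n2 * v1 + n1 * v2) = v1 := by
  linear_combination v1 * hn

theorem unit_normal_recompose_snd {n1 n2 : ℝ} (hn : n1 ^ 2 + n2 ^ 2 = 1) (v1 v2 : ℝ) :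
    n2 * (n1 * v1 + n2 * v2) + n1 * (-n2 * v1 + n1 * v2) = v2 := by
  linear_combination v2 * hn

/-- Consistency of the supercritical inflow flux: when the external state equals the
internal state, the supercritical inflow boundary flux equals the normal flux. -/
theorem swe_supercritical_inflow_consistent (g h v1 v2 n1 n2 c vn vτ α : ℝ)
    (hg : 0 < g) (hh : 0 < h) (hn : n1 ^ 2 + n2 ^ 2 = 1)
    (hc : c = Real.sqrt (g * h)) (hvn : vn = n1 * v1 + n2 * v2)
    (hvτ : vτ = -n2 * v1 + n1 * v2)
    (hsup : vn < -c) (hα : α = -1 + Real.sqrt 3) :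
    let Fs : Fin 3 → ℝ :=
      ![(α - 1) * h * vn - α / (2 * g) * (|vn| + c) * c * (α * c - vn) -
          α / (2 * g) * (|vn| - c) * c * (α * c + vn),
        (α / 2 - 1) * h * v1 * vn + (1 - 2 * α) * (g * h ^ 2 / 2) * n1 -
          1 / (4 * g) * (|vn| + c) * c * (α * c - vn) * (α * v1 - 2 * c * n1) -
          1 / (4 * g) * (|vn| - c) * c * (α * c + vn) * (α * v1 + 2 * c * n1) +
          |vn| * h * vτ * n2,
        (α / 2 - 1) * h * v2 * vn + (1 - 2 * α) * (g * h ^ 2 / 2) * n2 -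
          1 / (4 * g) * (|vn| + c) * c * (α * c - vn) * (α * v2 - 2 * c * n2) -
          1 / (4 * g) * (|vn| - c) * c * (α * c + vn) * (α * v2 + 2 * c * n2) -
          |vn| * h * vτ * n1]
    Fs = ![h * vn, h * v1 * vn + g / 2 * h ^ 2 * n1,
           h * v2 * vn + g / 2 * h ^ 2 * n2] := by
  intro Fs
  have hα2 : α ^ 2 + 2 * α = 2 := hα ▸ neg_one_add_sqrt_three_sq_add_two_mul
  have hc2 : c ^ 2 = g * h := hc ▸ sq_sqrt (by positivity)
  have hvn0 : vn ≤ 0 := by linarith [hc ▸ sqrt_nonneg (g * h)]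
  have hv1 : n1 * vn - n2 * vτ = v1 := hvn ▸ hvτ ▸ unit_normal_recompose_fst hn v1 v2
  have hv2 : n2 * vn + n1 * vτ = v2 := hvn ▸ hvτ ▸ unit_normal_recompose_snd hn v1 v2
  have hmass : Fs 0 = h * vn := inflow_mass_flux_eq hα2 hg.ne' hc2 hvn0
  have hmom1 : Fs 1 = h * v1 * vn + g / 2 * h ^ 2 * n1 := by
    change _ + |vn| * h * vτ * n2 = _
    rw [inflow_momentum_wave_eq hα2 hg.ne' hc2 hvn0, abs_of_nonpos hvn0]
    linear_combination h * vn * hv1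
  have hmom2 : Fs 2 = h * v2 * vn + g / 2 * h ^ 2 * n2 := by
    change _ - |vn| * h * vτ * n1 = _
    rw [inflow_momentum_wave_eq hα2 hg.ne' hc2 hvn0, abs_of_nonpos hvn0]
    linear_combination h * vn * hv2
  ext i
  fin_cases i
  exacts [hmass, hmom1, hmom2]
end

section
/- Entropy bound for the subcritical outflow flux. Let g > 0, let the interior state satisfy h > 0 and 0 < v_n < c, and let the exterior state satisfy h_ext > 0 and 0 < v_n^ext < c_ext, with α = −1 + √3. Let F* be the subcritical outflow flux with components F*₁ = (α/2) h v_n + (1−α) h c + (α/(2g)) c v_n² − (α/(2g)) λ̄₁ c_ext (α c_ext − v_n^ext); F*₂ = (α/4 + 1/2) h v1 v_n + ((1−α)/2) h c v1 + (α/(4g)) c v1 v_n² + (1−α)(g h²/2) n1 + (h v_n/2)((1+α)c − v_n) n1 − (1/(4g)) λ̄₁ c_ext (α c_ext − v_n^ext)(α v1 − 2 c n1); F*₃ = the same with (v1, n1) replaced by (v2, n2); where λ̄₁ = √((c − v_n)(c_ext − v_n^ext)). Then the boundary term is bounded below solely by the external data: F_n^ent + Vᵀ(F* − F_n) ≥ −(c_ext²/(4g))·(c_ext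 − v_n^ext)·(α c_ext − v_n^ext)². -/
/-!
Write `Q = 2(1 - α)c³ + (1 + 2α)c vₙ² + vₙ v_τ²`, `a = √(c - vₙ) c (αc - vₙ)` and
`b = √(c_ext - vₙᵉˣᵗ) c_ext (α c_ext - vₙᵉˣᵗ)`, so that `λ̄₁ = √(c - vₙ) √(c_ext - vₙᵉˣᵗ)`.
Using `g h = c²`, the entropy rate is `(2c²Q - 2ab) / (4g)`: the interior part of the flux
contributes `c²Q / (2g)` and the data part `-2ab / (4g)`. Because `α² + 2α = 2`,
`2Q - (c - vₙ)(αc - vₙ)²` is a polynomial with nonnegative coefficients in `c, vₙ ≥ 0`,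
so `a² ≤ 2c²Q`, and completing the square gives `2c²Q - 2ab ≥ a² - 2ab ≥ -b²`.
-/

open Matrix Real

noncomputable def swEntropyVar (g h v1 v2 : ℝ) : Fin 3 → ℝ :=
  ![g * h - (v1 ^ 2 + v2 ^ 2) / 2, v1, v2]

noncomputable def swNormalFlux (g h v1 v2 n1 n2 vn : ℝ) : Fin 3 → ℝ :=
  ![h * vn, h * v1 * vn + g / 2 * h ^ 2 * n1, h * v2 * vn + g / 2 * h ^ 2 * n2]

noncomputable def swNormalEntropyFlux (g h v1 v2 vn : ℝ) : ℝ :=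
  h * vn / 2 * (v1 ^ 2 + v2 ^ 2) + g * h ^ 2 * vn

/-- The subcritical outflow flux is
`outflowFluxInterior - (λ̄₁ c_ext (α c_ext - vₙᵉˣᵗ) / (4g)) • outflowDataDirection`. -/
noncomputable def outflowFluxInterior (g h v1 v2 n1 n2 c vn α : ℝ) : Fin 3 → ℝ :=
  ![α / 2 * h * vn + (1 - α) * h * c + α / (2 * g) * c * vn ^ 2,
    (α / 4 + 1 / 2) * h * v1 * vn + (1 - α) / 2 * h * c * v1 +
      α / (4 * g) * c * v1 * vn ^ 2 + (1 - α) * (g * h ^ 2 / 2) * n1 +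
      h * vn / 2 * ((1 + α) * c - vn) * n1,
    (α / 4 + 1 / 2) * h * v2 * vn + (1 - α) / 2 * h * c * v2 +
      α / (4 * g) * c * v2 * vn ^ 2 + (1 - α) * (g * h ^ 2 / 2) * n2 +
      h * vn / 2 * ((1 + α) * c - vn) * n2]

def outflowDataDirection (v1 v2 n1 n2 c α : ℝ) : Fin 3 → ℝ :=
  ![2 * α, α * v1 - 2 * c * n1, α * v2 - 2 * c * n2]

section

variable {g h v1 v2 n1 n2 c vn α : ℝ}

theorem swNormalEntropyFlux_add_dotProduct_outflowFluxInterior (hg : g ≠ 0)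
    (hc : c ^ 2 = g * h) (hn : n1 ^ 2 + n2 ^ 2 = 1) (hvn : vn = n1 * v1 + n2 * v2) :
    swNormalEntropyFlux g h v1 v2 vn +
        swEntropyVar g h v1 v2 ⬝ᵥ (outflowFluxInterior g h v1 v2 n1 n2 c vn α -
          swNormalFlux g h v1 v2 n1 n2 vn) =
      c ^ 2 / (2 * g) *
        (2 * (1 - α) * c ^ 3 + (1 + 2 * α) * c * vn ^ 2 + vn * (-n2 * v1 + n1 * v2) ^ 2) := by
  obtain rfl : h = c ^ 2 / g := by rw [hc]; field_simp
  subst hvn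
  simp only [swNormalEntropyFlux, swEntropyVar, outflowFluxInterior, swNormalFlux, dotProduct,
    Fin.sum_univ_three, Pi.sub_apply, cons_val_zero, cons_val_one, cons_val_two, head_cons,
    tail_cons]
  field_simp
  -- `v1² + v2² = vₙ² + v_τ²` on the unit circle
  linear_combination (-8 * c ^ 2 * (n1 * v1 + n2 * v2) * (v1 ^ 2 + v2 ^ 2)) * hn

theorem swEntropyVar_dotProduct_outflowDataDirection (hc : c ^ 2 = g * h)
    (hvn : vn = n1 * v1 + n2 * v2) :
    swEntropyVar g h v1 v2 ⬝ᵥ outflowDataDirection v1 v2 n1 n2 c α = 2 * c * (α * c - vn) := by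
  simp only [swEntropyVar, outflowDataDirection, dotProduct, Fin.sum_univ_three, cons_val_zero,
    cons_val_one, cons_val_two, head_cons, tail_cons]
  linear_combination (-2 * α) * hc + 2 * c * hvn

end

theorem sub_mul_sq_le_of_sq_add_two_mul_eq_two {α c vn vτ : ℝ} (hα : α ^ 2 + 2 * α = 2)
    (hα0 : 0 ≤ α) (hc : 0 ≤ c) (hvn : 0 ≤ vn) :
    (c - vn) * (α * c - vn) ^ 2 ≤
      2 * (2 * (1 - α) * c ^ 3 + (1 + 2 * α) * c * vn ^ 2 + vn * vτ ^ 2) := by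
  have hα1 : α ≤ 1 := by nlinarith
  have hgap : 2 * (2 * (1 - α) * c ^ 3 + (1 + 2 * α) * c * vn ^ 2 + vn * vτ ^ 2) -
      (c - vn) * (α * c - vn) ^ 2 =
      2 * (1 - α) * c ^ 3 + 2 * c ^ 2 * vn + (1 + 2 * α) * c * vn ^ 2 + vn ^ 3 +
        2 * vn * vτ ^ 2 := by
    linear_combination (-(c - vn) * c ^ 2) * hα
  have hgap_nonneg : 0 ≤ 2 * (1 - α) * c ^ 3 + 2 * c ^ 2 * vn + (1 + 2 * α) * c * vn ^ 2 +
      vn ^ 3 + 2 * vn * vτ ^ 2 := by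
    have : 0 ≤ 1 - α := by linarith
    positivity
  linarith

theorem neg_sq_le_sub_two_mul_of_sq_le {a b K : ℝ} (h : a ^ 2 ≤ K) : -b ^ 2 ≤ K - 2 * a * b := by
  nlinarith [sq_nonneg (a - b)]

theorem neg_sq_data_le_of_sub_mul_sq_le {g c vn ce ve α Q : ℝ} (hg : 0 < g) (hvn : vn ≤ c)
    (hve : ve ≤ ce) (hQ : (c - vn) * (α * c - vn) ^ 2 ≤ 2 * Q) :
    -(ce ^ 2 / (4 * g) * (ce - ve) * (α * ce - ve) ^ 2) ≤
      c ^ 2 / (2 * g) * Q -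
        √(c - vn) * √(ce - ve) * ce * (α * ce - ve) / (4 * g) * (2 * c * (α * c - vn)) := by
  set a := √(c - vn) * c * (α * c - vn)
  set b := √(ce - ve) * ce * (α * ce - ve)
  have ha : a ^ 2 ≤ 2 * c ^ 2 * Q := by
    rw [mul_pow, mul_pow, sq_sqrt (sub_nonneg.2 hvn)]
    linarith [mul_le_mul_of_nonneg_left hQ (sq_nonneg c)]
  have hb : b ^ 2 = (ce - ve) * ce ^ 2 * (α * ce - ve) ^ 2 := by
    rw [mul_pow, mul_pow, sq_sqrt (sub_nonneg.2 hve)]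
  calc -(ce ^ 2 / (4 * g) * (ce - ve) * (α * ce - ve) ^ 2) = -b ^ 2 / (4 * g) := by
        rw [hb]; ring
    _ ≤ (2 * c ^ 2 * Q - 2 * a * b) / (4 * g) := by
        gcongr; exact neg_sq_le_sub_two_mul_of_sq_le ha
    _ = _ := by ring

theorem swe_subcritical_outflow_entropy_bound_general
    (g h v1 v2 n1 n2 c vn cext vne : ℝ)
    (hg : 0 < g) (hh : 0 < h) (hn : n1 ^ 2 + n2 ^ 2 = 1)
    (hc : c = Real.sqrt (g * h)) (hvn : vn = n1 * v1 + n2 * v2)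
    (hsub : 0 < vn ∧ vn < c) (hsube : 0 < vne ∧ vne < cext) :
    ∀ α : ℝ, α = -1 + Real.sqrt 3 →
    let lam1 : ℝ := Real.sqrt ((c - vn) * (cext - vne))
    let V : Fin 3 → ℝ := ![g * h - (v1 ^ 2 + v2 ^ 2) / 2, v1, v2]
    let Fn : Fin 3 → ℝ :=
      ![h * vn, h * v1 * vn + g / 2 * h ^ 2 * n1, h * v2 * vn + g / 2 * h ^ 2 * n2]
    let Fent : ℝ := h * vn / 2 * (v1 ^ 2 + v2 ^ 2) + g * h ^ 2 * vn
    let Fs : Fin 3 → ℝ :=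
      ![α / 2 * h * vn + (1 - α) * h * c + α / (2 * g) * c * vn ^ 2 -
          α / (2 * g) * lam1 * cext * (α * cext - vne),
        (α / 4 + 1 / 2) * h * v1 * vn + (1 - α) / 2 * h * c * v1 +
          α / (4 * g) * c * v1 * vn ^ 2 + (1 - α) * (g * h ^ 2 / 2) * n1 +
          h * vn / 2 * ((1 + α) * c - vn) * n1 -
          1 / (4 * g) * lam1 * cext * (α * cext - vne) * (α * v1 - 2 * c * n1),
        (α / 4 + 1 / 2) * h * v2 * vn + (1 - α) / 2 * h * c * v2 +
          α / (4 * g) * c * v2 * vn ^ 2 + (1 - α) * (g * h ^ 2 / 2) * n2 +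
          h * vn / 2 * ((1 + α) * c - vn) * n2 -
          1 / (4 * g) * lam1 * cext * (α * cext - vne) * (α * v2 - 2 * c * n2)]
    Fent + V ⬝ᵥ (Fs - Fn) ≥
      -(cext ^ 2 / (4 * g) * (cext - vne) * (α * cext - vne) ^ 2) := by
  intro α hα lam1 V Fn Fent Fs
  show swNormalEntropyFlux g h v1 v2 vn + swEntropyVar g h v1 v2 ⬝ᵥ
    (Fs - swNormalFlux g h v1 v2 n1 n2 vn) ≥ _
  have hc2 : c ^ 2 = g * h := by rw [hc]; exact sq_sqrt (by positivity)
  have hsplit : Fs = outflowFluxInterior g h v1 v2 n1 n2 c vn α -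
      (lam1 * cext * (α * cext - vne) / (4 * g)) • outflowDataDirection v1 v2 n1 n2 c α := by
    ext i
    fin_cases i <;> simp only [Fs, outflowFluxInterior, outflowDataDirection, Pi.sub_apply,
      Pi.smul_apply, smul_eq_mul, Fin.zero_eta, Fin.mk_one, Fin.reduceFinMk, cons_val_zero,
      cons_val_one, cons_val_two, head_cons, tail_cons] <;> ring
  have hα2 : α ^ 2 + 2 * α = 2 := by
    rw [hα]; linear_combination sq_sqrt (show (0 : ℝ) ≤ 3 by norm_num)
  have hα0 : 0 ≤ α := by rw [hα]; linarith [one_le_sqrt.2 (show (1 : ℝ) ≤ 3 by norm_num)]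
  have hlam : lam1 = √(c - vn) * √(cext - vne) := sqrt_mul (sub_nonneg.2 hsub.2.le) _
  rw [hsplit, sub_right_comm, dotProduct_sub, dotProduct_smul, smul_eq_mul, ← add_sub_assoc,
    swNormalEntropyFlux_add_dotProduct_outflowFluxInterior hg.ne' hc2 hn hvn,
    swEntropyVar_dotProduct_outflowDataDirection hc2 hvn, hlam, ge_iff_le]
  exact neg_sq_data_le_of_sub_mul_sq_le hg hsub.2.le hsube.2.le
    (sub_mul_sq_le_of_sq_add_two_mul_eq_two hα2 hα0 (hsub.1.trans hsub.2).le hsub.1.le)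

/-- Entropy bound for the subcritical outflow flux: the boundary term
`F_n^ent + Vᵀ(F* − F_n)` is bounded below solely by external data. -/
theorem swe_subcritical_outflow_entropy_bound
    (g h v1 v2 n1 n2 hext v1e v2e c vn cext vne : ℝ)
    (hg : 0 < g) (hh : 0 < h) (hhe : 0 < hext) (hn : n1 ^ 2 + n2 ^ 2 = 1)
    (hc : c = Real.sqrt (g * h)) (hvn : vn = n1 * v1 + n2 * v2)
    (hce : cext = Real.sqrt (g * hext)) (hvne : vne = n1 * v1e + n2 * v2e)
    (hsub : 0 < vn ∧ vn < c) (hsube : 0 < vne ∧ vne < cext) :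
    ∀ α : ℝ, α = -1 + Real.sqrt 3 →
    let lam1 : ℝ := Real.sqrt ((c - vn) * (cext - vne))
    let V : Fin 3 → ℝ := ![g * h - (v1 ^ 2 + v2 ^ 2) / 2, v1, v2]
    let Fn : Fin 3 → ℝ :=
      ![h * vn, h * v1 * vn + g / 2 * h ^ 2 * n1, h * v2 * vn + g / 2 * h ^ 2 * n2]
    let Fent : ℝ := h * vn / 2 * (v1 ^ 2 + v2 ^ 2) + g * h ^ 2 * vn
    let Fs : Fin 3 → ℝ :=
      ![α / 2 * h * vn + (1 - α) * h * c + α / (2 * g) * c * vn ^ 2 -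
          α / (2 * g) * lam1 * cext * (α * cext - vne),
        (α / 4 + 1 / 2) * h * v1 * vn + (1 - α) / 2 * h * c * v1 +
          α / (4 * g) * c * v1 * vn ^ 2 + (1 - α) * (g * h ^ 2 / 2) * n1 +
          h * vn / 2 * ((1 + α) * c - vn) * n1 -
          1 / (4 * g) * lam1 * cext * (α * cext - vne) * (α * v1 - 2 * c * n1),
        (α / 4 + 1 / 2) * h * v2 * vn + (1 - α) / 2 * h * c * v2 +
          α / (4 * g) * c * v2 * vn ^ 2 + (1 - α) * (g * h ^ 2 / 2) * n2 +
          h * vn / 2 * ((1 + α) * c - vn) * n2 -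
          1 / (4 * g) * lam1 * cext * (α * cext - vne) * (α * v2 - 2 * c * n2)]
    Fent + V ⬝ᵥ (Fs - Fn) ≥
      -(cext ^ 2 / (4 * g) * (cext - vne) * (α * cext - vne) ^ 2) :=
  swe_subcritical_outflow_entropy_bound_general g h v1 v2 n1 n2 c vn cext vne hg hh hn hc hvn hsub
    hsube
end

section
/- Entropy bound for the subcritical inflow flux. Let g > 0, let the interior state satisfy h > 0 and −c < v_n < 0, and let the exterior state satisfy h_ext > 0 and −c_ext < v_n^ext < 0, with α = −1 + √3. Let F* be the subcritical inflow flux with components F*₁ = (α/2) h v_n + (1−α) h c + (α/(2g)) c v_n² − (α/(2g)) λ̄₁ c_ext (α c_ext − v_n^ext); F*₂ = (α/4 − 1/2) h v1 v_n + ((1−α)/2) h c v1 + (α/(4g)) c v1 v_n² + (1−α)(g h²/2) n1 + (h v_n/2)((1+α)c + v_n) n1 − (1/(4g)) λ̄₁ c_ext (α c_ext − v_n^ext)(α v1 − 2 c n1) + λ̄₂ h̄ v_τ^ext n2; F*₃ = the same with (v1, n1) replaced by (v2, n2) in all terms except the last, and last term −λ̄₂ h̄ v_τ^ext n1; where λ̄₁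 = √((|v_n| + c)(|v_n^ext| + c_ext)), λ̄₂ = √(|v_n|·|v_n^ext|), h̄ = √(h·h_ext). Then the boundary term is bounded below solely by the external data: F_n^ent + Vᵀ(F* − F_n) ≥ −(c_ext²/(4g))·[(c_ext + |v_n^ext|)·(α c_ext − v_n^ext)² + 2·|v_n^ext|·(v_τ^ext)²]. -/
open Matrix Real

/-!
In the frame of the boundary normal, and with `c² = g h`, the entropy rate of the flux equals
`h ((1 - α) c³ + (1 + 2α) c v_n² / 2 - v_n v_τ² / 2)` minus two terms coupling interior and exterior
data, `λ̄₁ a K / (2g)` with `a = c (α c - v_n)`, `K = c_ext (α c_ext - v_n^ext)`, and `λ̄₂ h̄ v_τ v_τ^ext`.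
Because `α² + 2α = 2`, the interior part is `((c - v_n) a² + (c + v_n) b² - 2 v_n (c v_τ)²) / (4g)`
with `b = c (α c + v_n)`. Since `λ̄₁ = √((c - v_n)(|v_n^ext| + c_ext))` and `h̄ = c c_ext / g`, the
weighted AM-GM inequality `2 √(x y) a b ≤ x a² + y b²` absorbs each coupling term into the interior
part at the price of exactly the data term, and what is left, `(c + v_n) b² / (4g)`, is nonnegative
because the inflow is subcritical.
-/

noncomputable section

namespace ShallowWater

def entropyVariables (g h v1 v2 : ℝ) : Fin 3 → ℝ := ![g * h - (v1 ^ 2 + v2 ^ 2) / 2, v1, v2]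

def normalFlux (g h v1 v2 n1 n2 vn : ℝ) : Fin 3 → ℝ :=
  ![h * vn, h * v1 * vn + g / 2 * h ^ 2 * n1, h * v2 * vn + g / 2 * h ^ 2 * n2]

def normalEntropyFlux (g h v1 v2 vn : ℝ) : ℝ := h * vn / 2 * (v1 ^ 2 + v2 ^ 2) + g * h ^ 2 * vn

def boundaryEntropyRate (g h v1 v2 n1 n2 vn : ℝ) (Fstar : Fin 3 → ℝ) : ℝ :=
  normalEntropyFlux g h v1 v2 vn +
    entropyVariables g h v1 v2 ⬝ᵥ (Fstar - normalFlux g h v1 v2 n1 n2 vn)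

/-- The flux `F*` with `λ̄₁` as `lam1` and `λ̄₂ h̄` as `mu`. -/
def subcriticalInflowFlux (g α h v1 v2 n1 n2 c vn lam1 mu cext vne vte : ℝ) : Fin 3 → ℝ :=
  ![α / 2 * h * vn + (1 - α) * h * c + α / (2 * g) * c * vn ^ 2 -
      α / (2 * g) * lam1 * cext * (α * cext - vne),
    (α / 4 - 1 / 2) * h * v1 * vn + (1 - α) / 2 * h * c * v1 +
      α / (4 * g) * c * v1 * vn ^ 2 + (1 - α) * (g * h ^ 2 / 2) * n1 +
      h * vn / 2 * ((1 + α) * c + vn) * n1 -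
      1 / (4 * g) * lam1 * cext * (α * cext - vne) * (α * v1 - 2 * c * n1) +
      mu * vte * n2,
    (α / 4 - 1 / 2) * h * v2 * vn + (1 - α) / 2 * h * c * v2 +
      α / (4 * g) * c * v2 * vn ^ 2 + (1 - α) * (g * h ^ 2 / 2) * n2 +
      h * vn / 2 * ((1 + α) * c + vn) * n2 -
      1 / (4 * g) * lam1 * cext * (α * cext - vne) * (α * v2 - 2 * c * n2) -
      mu * vte * n1]

def rotatedEntropyRate (g α h c vn vτ lam1 mu cext vne vte : ℝ) : ℝ :=
  h * ((1 - α) * c ^ 3 + (1 + 2 * α) * c * vn ^ 2 / 2 - vn * vτ ^ 2 / 2)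
    - lam1 * (c * (α * c - vn)) * (cext * (α * cext - vne)) / (2 * g) - mu * vτ * vte

/-- The squared norm `GᵀG` of the data vector. -/
def dataEnergy (g α cext vne vte : ℝ) : ℝ :=
  cext ^ 2 / (4 * g) * ((cext + |vne|) * (α * cext - vne) ^ 2 + 2 * |vne| * vte ^ 2)

theorem boundaryEntropyRate_subcriticalInflowFlux
    {g α h v1 v2 n1 n2 c vn vτ lam1 mu cext vne vte : ℝ} (hg : g ≠ 0) (hc : c ^ 2 = g * h)
    (hn : n1 ^ 2 + n2 ^ 2 = 1) (hvn : vn = n1 * v1 + n2 * v2) (hvτ : vτ = -n2 * v1 + n1 * v2) :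
    boundaryEntropyRate g h v1 v2 n1 n2 vn
        (subcriticalInflowFlux g α h v1 v2 n1 n2 c vn lam1 mu cext vne vte) =
      rotatedEntropyRate g α h c vn vτ lam1 mu cext vne vte := by
  have hspeed : v1 ^ 2 + v2 ^ 2 = vn ^ 2 + vτ ^ 2 := by
    rw [hvn, hvτ]; linear_combination (-(v1 ^ 2 + v2 ^ 2)) * hn
  have hgg : g * g⁻¹ = 1 := mul_inv_cancel₀ hg
  simp only [boundaryEntropyRate, normalEntropyFlux, entropyVariables, subcriticalInflowFlux,
    normalFlux, rotatedEntropyRate, dotProduct, Fin.sum_univ_three, Pi.sub_apply, cons_val_zero,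
    cons_val_one, cons_val_two, head_cons, tail_cons]
  -- `hspeed`, `hvn`, `hvτ` pass to the normal frame; `hgg`, `hc` then trade `g h` for `c²`.
  linear_combination (-(h * vn / 2)) * hspeed
    - (-(α * g * h ^ 2 / 2) + h * vn * ((1 + α) * c + vn) / 2
      + c * lam1 * cext * (α * cext - vne) / (2 * g)) * hvn
    + mu * vte * hvτ + α * c * h * vn ^ 2 / 2 * hgg
    + (α * lam1 * cext * (α * cext - vne) / (2 * g) + (α - 1) * h * c) * hc

theorem two_mul_sqrt_mul_mul_mul_le {x y : ℝ} (hx : 0 ≤ x) (hy : 0 ≤ y) (a b : ℝ) :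
    2 * √(x * y) * a * b ≤ x * a ^ 2 + y * b ^ 2 := by
  have h := two_mul_le_add_sq (√x * a) (√y * b)
  rw [mul_pow, mul_pow, sq_sqrt hx, sq_sqrt hy] at h
  rw [sqrt_mul hx]
  linear_combination h

theorem sqrt_mul_eq_sqrt_mul_mul_sqrt_mul_div {g h h' : ℝ} (hg : 0 < g) (hh : 0 ≤ h) :
    √(h * h') = √(g * h) * √(g * h') / g := by
  rw [← sqrt_mul (by positivity : 0 ≤ g * h), show g * h * (g * h') = g ^ 2 * (h * h') by ring,
    sqrt_mul (sq_nonneg g), sqrt_sq hg.le]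
  field_simp

theorem neg_dataEnergy_le_rotatedEntropyRate {g α h c vn vτ hext cext vne vte : ℝ}
    (hg : 0 < g) (hh : 0 ≤ h) (hc : c = √(g * h)) (hce : cext = √(g * hext))
    (hα : α = -1 + √3) (hsub : -c < vn ∧ vn < 0) :
    -dataEnergy g α cext vne vte ≤
      rotatedEntropyRate g α h c vn vτ (√((|vn| + c) * (|vne| + cext)))
        (√(|vn| * |vne|) * √(h * hext)) cext vne vte := by
  have hc0 : 0 ≤ c := hc ▸ sqrt_nonneg _
  have hce0 : 0 ≤ cext := hce ▸ sqrt_nonneg _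
  have hh' : h = c ^ 2 / g := by rw [hc, sq_sqrt (by positivity)]; field_simp
  have hbar : √(h * hext) = c * cext / g := by
    rw [hc, hce]; exact sqrt_mul_eq_sqrt_mul_mul_sqrt_mul_div hg hh
  have hα2 : α ^ 2 + 2 * α = 2 := by
    rw [hα]; linear_combination sq_sqrt (show (0 : ℝ) ≤ 3 by norm_num)
  have hnormal := two_mul_sqrt_mul_mul_mul_le (by positivity : 0 ≤ |vn| + c)
    (by positivity : 0 ≤ |vne| + cext) (c * (α * c - vn)) (cext * (α * cext - vne))
  have htangential := two_mul_sqrt_mul_mul_mul_le (abs_nonneg vn) (abs_nonneg vne)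
    (c * vτ) (cext * vte)
  have hdiss : 0 ≤ (c + vn) * (c * (α * c + vn)) ^ 2 :=
    mul_nonneg (by linarith [hsub.1]) (sq_nonneg _)
  rw [dataEnergy, rotatedEntropyRate, hbar]
  rw [abs_of_neg hsub.2] at hnormal htangential ⊢
  -- `α² + 2α = 2` is what turns `(1 - α) c³` into the `α² c³` needed to complete the squares.
  linear_combination hnormal / (4 * g) + htangential / (2 * g) + hdiss / (4 * g)
    - ((1 - α) * c ^ 3 + (1 + 2 * α) * c * vn ^ 2 / 2 - vn * vτ ^ 2 / 2) * hh'
    + c ^ 5 / (2 * g) * hα2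

end ShallowWater

end

open ShallowWater in
theorem swe_subcritical_inflow_entropy_bound_general
    (g h v1 v2 n1 n2 hext c vn vτ cext vne vte : ℝ)
    (hg : 0 < g) (hh : 0 < h) (hn : n1 ^ 2 + n2 ^ 2 = 1)
    (hc : c = Real.sqrt (g * h)) (hvn : vn = n1 * v1 + n2 * v2)
    (hvτ : vτ = -n2 * v1 + n1 * v2)
    (hce : cext = Real.sqrt (g * hext))
    (hsub : -c < vn ∧ vn < 0) :
    ∀ α : ℝ, α = -1 + Real.sqrt 3 →
    let lam1 : ℝ := Real.sqrt ((|vn| + c) * (|vne| + cext))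
    let lam2 : ℝ := Real.sqrt (|vn| * |vne|)
    let hbar : ℝ := Real.sqrt (h * hext)
    let V : Fin 3 → ℝ := ![g * h - (v1 ^ 2 + v2 ^ 2) / 2, v1, v2]
    let Fn : Fin 3 → ℝ :=
      ![h * vn, h * v1 * vn + g / 2 * h ^ 2 * n1, h * v2 * vn + g / 2 * h ^ 2 * n2]
    let Fent : ℝ := h * vn / 2 * (v1 ^ 2 + v2 ^ 2) + g * h ^ 2 * vn
    let Fs : Fin 3 → ℝ :=
      ![α / 2 * h * vn + (1 - α) * h * c + α / (2 * g) * c * vn ^ 2 -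
          α / (2 * g) * lam1 * cext * (α * cext - vne),
        (α / 4 - 1 / 2) * h * v1 * vn + (1 - α) / 2 * h * c * v1 +
          α / (4 * g) * c * v1 * vn ^ 2 + (1 - α) * (g * h ^ 2 / 2) * n1 +
          h * vn / 2 * ((1 + α) * c + vn) * n1 -
          1 / (4 * g) * lam1 * cext * (α * cext - vne) * (α * v1 - 2 * c * n1) +
          lam2 * hbar * vte * n2,
        (α / 4 - 1 / 2) * h * v2 * vn + (1 - α) / 2 * h * c * v2 +
          α / (4 * g) * c * v2 * vn ^ 2 + (1 - α) * (g * h ^ 2 / 2) * n2 +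
          h * vn / 2 * ((1 + α) * c + vn) * n2 -
          1 / (4 * g) * lam1 * cext * (α * cext - vne) * (α * v2 - 2 * c * n2) -
          lam2 * hbar * vte * n1]
    Fent + V ⬝ᵥ (Fs - Fn) ≥
      -(cext ^ 2 / (4 * g) *
        ((cext + |vne|) * (α * cext - vne) ^ 2 + 2 * |vne| * vte ^ 2)) := by
  intro α hα lam1 lam2 hbar V Fn Fent Fs
  have hc2 : c ^ 2 = g * h := by rw [hc, sq_sqrt (by positivity)]
  show boundaryEntropyRate g h v1 v2 n1 n2 vn
      (subcriticalInflowFlux g α h v1 v2 n1 n2 c vn lam1 (lam2 * hbar) cext vne vte) ≥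
    -dataEnergy g α cext vne vte
  rw [boundaryEntropyRate_subcriticalInflowFlux hg.ne' hc2 hn hvn hvτ]
  exact neg_dataEnergy_le_rotatedEntropyRate hg hh.le hc hce hα hsub

/-- Entropy bound for the subcritical inflow flux: the boundary term
`F_n^ent + Vᵀ(F* − F_n)` is bounded below solely by external data. -/
theorem swe_subcritical_inflow_entropy_bound
    (g h v1 v2 n1 n2 hext v1e v2e c vn vτ cext vne vte : ℝ)
    (hg : 0 < g) (hh : 0 < h) (hhe : 0 < hext) (hn : n1 ^ 2 + n2 ^ 2 = 1)
    (hc : c = Real.sqrt (g * h)) (hvn : vn = n1 * v1 + n2 * v2)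
    (hvτ : vτ = -n2 * v1 + n1 * v2)
    (hce : cext = Real.sqrt (g * hext)) (hvne : vne = n1 * v1e + n2 * v2e)
    (hvte : vte = -n2 * v1e + n1 * v2e)
    (hsub : -c < vn ∧ vn < 0) (hsube : -cext < vne ∧ vne < 0) :
    ∀ α : ℝ, α = -1 + Real.sqrt 3 →
    let lam1 : ℝ := Real.sqrt ((|vn| + c) * (|vne| + cext))
    let lam2 : ℝ := Real.sqrt (|vn| * |vne|)
    let hbar : ℝ := Real.sqrt (h * hext)
    let V : Fin 3 → ℝ := ![g * h - (v1 ^ 2 + v2 ^ 2) / 2, v1, v2]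
    let Fn : Fin 3 → ℝ :=
      ![h * vn, h * v1 * vn + g / 2 * h ^ 2 * n1, h * v2 * vn + g / 2 * h ^ 2 * n2]
    let Fent : ℝ := h * vn / 2 * (v1 ^ 2 + v2 ^ 2) + g * h ^ 2 * vn
    let Fs : Fin 3 → ℝ :=
      ![α / 2 * h * vn + (1 - α) * h * c + α / (2 * g) * c * vn ^ 2 -
          α / (2 * g) * lam1 * cext * (α * cext - vne),
        (α / 4 - 1 / 2) * h * v1 * vn + (1 - α) / 2 * h * c * v1 +
          α / (4 * g) * c * v1 * vn ^ 2 + (1 - α) * (g * h ^ 2 / 2) * n1 +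
          h * vn / 2 * ((1 + α) * c + vn) * n1 -
          1 / (4 * g) * lam1 * cext * (α * cext - vne) * (α * v1 - 2 * c * n1) +
          lam2 * hbar * vte * n2,
        (α / 4 - 1 / 2) * h * v2 * vn + (1 - α) / 2 * h * c * v2 +
          α / (4 * g) * c * v2 * vn ^ 2 + (1 - α) * (g * h ^ 2 / 2) * n2 +
          h * vn / 2 * ((1 + α) * c + vn) * n2 -
          1 / (4 * g) * lam1 * cext * (α * cext - vne) * (α * v2 - 2 * c * n2) -
          lam2 * hbar * vte * n1]
    Fent + V ⬝ᵥ (Fs - Fn) ≥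
      -(cext ^ 2 / (4 * g) *
        ((cext + |vne|) * (α * cext - vne) ^ 2 + 2 * |vne| * vte ^ 2)) :=
  swe_subcritical_inflow_entropy_bound_general g h v1 v2 n1 n2 hext c vn vτ cext vne vte hg hh hn hc
    hvn hvτ hce hsub
end

section
/- Entropy bound for the supercritical inflow flux. Let g > 0, let the interior state satisfy h > 0 and v_n < −c, and let the exterior state satisfy h_ext > 0 and v_n^ext < −c_ext, with α = −1 + √3. Let F* be the supercritical inflow flux with components F*₁ = (α − 1) h v_n − (α/(2g)) λ̄₁ c_ext (α c_ext − v_n^ext) − (α/(2g)) λ̄₃ c_ext (α c_ext + v_n^ext); F*₂ = (α/2 − 1) h v1 v_n + (1 − 2α)(g h²/2) n1 − (1/(4g)) λ̄₁ c_ext (α c_ext − v_n^ext)(α v1 − 2 c n1) − (1/(4g)) λ̄₃ c_ext (α c_ext + v_n^ext)(α v1 + 2 c n1) + λ̄₂ h̄ v_τ^ext n2; F*₃ = the same with (v1, n1) replaced by (v2, n2) in all terms except the last, and last term −λ̄₂ h̄ v_τ^ext n1; where λ̄₁ = √((|v_n| + c)(|v_n^ext| + c_ext)), λ̄₂ = √(|v_n|·|v_n^ext|),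 λ̄₃ = √((|v_n| − c)(|v_n^ext| − c_ext)), h̄ = √(h·h_ext). Then the boundary term is bounded below solely by the external data: F_n^ent + Vᵀ(F* − F_n) ≥ −(c_ext²/(4g))·[(c_ext + |v_n^ext|)·(α c_ext − v_n^ext)² + 2·|v_n^ext|·(v_τ^ext)² + (|v_n^ext| − c_ext)·(α c_ext + v_n^ext)²]. -/
open Matrix Real

/-!
Write `xᵢ = |vₙ| + c, |vₙ|, |vₙ| - c` and `Pᵢ = c (α c - vₙ), c v_τ, c (α c + vₙ)` for the
interior state, `yᵢ`, `Qᵢ` for their exterior analogues, and `w = (1, 2, 1)`. Because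
`α² + 2α = 2`, the `λ̄`-free part of `F*` turns the entropy rate into
`-F_n^ent = Σ wᵢ xᵢ Pᵢ² / 4g` (for `vₙ ≤ 0`), while the terms linear in the `λ̄ᵢ` contribute
`-Σ wᵢ λ̄ᵢ Pᵢ Qᵢ / 2g`. Since `λ̄ᵢ = √(xᵢ yᵢ)`, completing each square gives
`xᵢ Pᵢ² - 2 λ̄ᵢ Pᵢ Qᵢ ≥ -yᵢ Qᵢ²`, and `Σ wᵢ yᵢ Qᵢ² / 4g` is the data term.
-/

theorem sqrt_mul_mul_sqrt_mul {a b d : ℝ} (ha : 0 ≤ a) (hb : 0 ≤ b) :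
    √(a * b) * √(a * d) = a * √(b * d) := by
  rw [← Real.sqrt_mul (mul_nonneg ha hb), show a * b * (a * d) = a ^ 2 * (b * d) by ring,
    Real.sqrt_mul (sq_nonneg a), Real.sqrt_sq ha]

theorem two_mul_sqrt_mul_mul_mul_le {x y : ℝ} (hx : 0 ≤ x) (hy : 0 ≤ y) (a b : ℝ) :
    2 * (√(x * y) * a * b) ≤ x * a ^ 2 + y * b ^ 2 := by
  have := two_mul_le_add_sq (√x * a) (√y * b)
  rw [Real.sqrt_mul hx]
  nlinarith [Real.sq_sqrt hx, Real.sq_sqrt hy]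

noncomputable section ShallowWater

variable (α g h v1 v2 n1 n2 c vn cext vne vte lam1 lam2 lam3 hbar : ℝ)

def entropyVariables : Fin 3 → ℝ := ![g * h - (v1 ^ 2 + v2 ^ 2) / 2, v1, v2]

def normalFlux : Fin 3 → ℝ :=
  ![h * vn, h * v1 * vn + g / 2 * h ^ 2 * n1, h * v2 * vn + g / 2 * h ^ 2 * n2]

def normalEntropyFlux : ℝ := h * vn / 2 * (v1 ^ 2 + v2 ^ 2) + g * h ^ 2 * vn

def supercriticalInflowFlux : Fin 3 → ℝ :=
  ![(α - 1) * h * vn - α / (2 * g) * lam1 * cext * (α * cext - vne) -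
      α / (2 * g) * lam3 * cext * (α * cext + vne),
    (α / 2 - 1) * h * v1 * vn + (1 - 2 * α) * (g * h ^ 2 / 2) * n1 -
      1 / (4 * g) * lam1 * cext * (α * cext - vne) * (α * v1 - 2 * c * n1) -
      1 / (4 * g) * lam3 * cext * (α * cext + vne) * (α * v1 + 2 * c * n1) +
      lam2 * hbar * vte * n2,
    (α / 2 - 1) * h * v2 * vn + (1 - 2 * α) * (g * h ^ 2 / 2) * n2 -
      1 / (4 * g) * lam1 * cext * (α * cext - vne) * (α * v2 - 2 * c * n2) -
      1 / (4 * g) * lam3 * cext * (α * cext + vne) * (α * v2 + 2 * c * n2) -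
      lam2 * hbar * vte * n1]

def inflowEntropyRate : ℝ :=
  normalEntropyFlux g h v1 v2 vn + entropyVariables g h v1 v2 ⬝ᵥ
    (supercriticalInflowFlux α g h v1 v2 n1 n2 c vn cext vne vte lam1 lam2 lam3 hbar -
      normalFlux g h v1 v2 n1 n2 vn)

variable {α g h v1 v2 n1 n2 c vn cext vne vte lam1 lam2 lam3 hbar : ℝ}

theorem inflowEntropyRate_eq {vτ : ℝ} (hg : g ≠ 0) (hn : n1 ^ 2 + n2 ^ 2 = 1)
    (hc : c ^ 2 = g * h) (hα : α ^ 2 + 2 * α = 2) (hhbar : g * hbar = c * cext)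
    (hvn : vn = n1 * v1 + n2 * v2) (hvτ : vτ = -n2 * v1 + n1 * v2) :
    inflowEntropyRate α g h v1 v2 n1 n2 c vn cext vne vte lam1 lam2 lam3 hbar =
      ((-vn + c) * (c * (α * c - vn)) ^ 2 + 2 * (-vn * (c * vτ) ^ 2) +
          (-vn - c) * (c * (α * c + vn)) ^ 2 -
        2 * (lam1 * (c * (α * c - vn)) * (cext * (α * cext - vne)) +
          2 * (lam2 * (c * vτ) * (cext * vte)) +
          lam3 * (c * (α * c + vn)) * (cext * (α * cext + vne)))) / (4 * g) := by
  subst hvn hvτ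
  simp only [inflowEntropyRate, normalEntropyFlux, entropyVariables, supercriticalInflowFlux,
    normalFlux, dotProduct, Fin.sum_univ_three, Pi.sub_apply, cons_val_zero, cons_val_one,
    cons_val_two, head_cons, tail_cons]
  linear_combination (norm := (field_simp; ring))
    ((n1 * v1 + n2 * v2) / g * (c ^ 2 + g * h) +
        (n1 * v1 + n2 * v2) * (v1 ^ 2 + v2 ^ 2) / (2 * g) +
      α / (2 * g) * (lam1 * cext * (α * cext - vne) + lam3 * cext * (α * cext + vne))) * hc +
    c ^ 2 * (n1 * v1 + n2 * v2) * (v1 ^ 2 + v2 ^ 2) / (2 * g) * hn +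
    c ^ 4 * (n1 * v1 + n2 * v2) / (2 * g) * hα -
    lam2 * vte * (-n2 * v1 + n1 * v2) / g * hhbar

theorem le_inflowEntropyRate {vτ : ℝ} (hg : 0 < g) (hn : n1 ^ 2 + n2 ^ 2 = 1)
    (hc : c ^ 2 = g * h) (hc0 : 0 ≤ c) (hα : α ^ 2 + 2 * α = 2) (hhbar : g * hbar = c * cext)
    (hvn : vn = n1 * v1 + n2 * v2) (hvτ : vτ = -n2 * v1 + n1 * v2) (hcext : 0 ≤ cext)
    (hsup : vn ≤ -c) (hsupe : vne ≤ -cext) :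
    -(cext ^ 2 / (4 * g) *
        ((cext + |vne|) * (α * cext - vne) ^ 2 + 2 * |vne| * vte ^ 2 +
          (|vne| - cext) * (α * cext + vne) ^ 2)) ≤
      inflowEntropyRate α g h v1 v2 n1 n2 c vn cext vne vte √((|vn| + c) * (|vne| + cext))
        √(|vn| * |vne|) √((|vn| - c) * (|vne| - cext)) hbar := by
  have hvn_abs : |vn| = -vn := abs_of_nonpos (by linarith)
  have hvne_abs : cext ≤ |vne| := by rw [abs_of_nonpos (by linarith)]; linarith
  rw [inflowEntropyRate_eq hg.ne' hn hc hα hhbar hvn hvτ, hvn_abs]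
  have h1 := two_mul_sqrt_mul_mul_mul_le (x := -vn + c) (y := |vne| + cext) (by linarith)
    (by linarith) (c * (α * c - vn)) (cext * (α * cext - vne))
  have h2 := two_mul_sqrt_mul_mul_mul_le (x := -vn) (y := |vne|) (by linarith) (by linarith)
    (c * vτ) (cext * vte)
  have h3 := two_mul_sqrt_mul_mul_mul_le (x := -vn - c) (y := |vne| - cext) (by linarith)
    (by linarith) (c * (α * c + vn)) (cext * (α * cext + vne))
  calc _ = -((|vne| + cext) * (cext * (α * cext - vne)) ^ 2 + 2 * (|vne| * (cext * vte) ^ 2) +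
        (|vne| - cext) * (cext * (α * cext + vne)) ^ 2) / (4 * g) := by ring
    _ ≤ _ := by gcongr; linarith

end ShallowWater

theorem swe_supercritical_inflow_entropy_bound_general
    (g h v1 v2 n1 n2 hext c vn vτ cext vne vte : ℝ)
    (hg : 0 < g) (hh : 0 < h) (hn : n1 ^ 2 + n2 ^ 2 = 1)
    (hc : c = Real.sqrt (g * h)) (hvn : vn = n1 * v1 + n2 * v2)
    (hvτ : vτ = -n2 * v1 + n1 * v2)
    (hce : cext = Real.sqrt (g * hext))
    (hsup : vn < -c) (hsupe : vne < -cext) :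
    ∀ α : ℝ, α = -1 + Real.sqrt 3 →
    let lam1 : ℝ := Real.sqrt ((|vn| + c) * (|vne| + cext))
    let lam2 : ℝ := Real.sqrt (|vn| * |vne|)
    let lam3 : ℝ := Real.sqrt ((|vn| - c) * (|vne| - cext))
    let hbar : ℝ := Real.sqrt (h * hext)
    let V : Fin 3 → ℝ := ![g * h - (v1 ^ 2 + v2 ^ 2) / 2, v1, v2]
    let Fn : Fin 3 → ℝ :=
      ![h * vn, h * v1 * vn + g / 2 * h ^ 2 * n1, h * v2 * vn + g / 2 * h ^ 2 * n2]
    let Fent : ℝ := h * vn / 2 * (v1 ^ 2 + v2 ^ 2) + g * h ^ 2 * vn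
    let Fs : Fin 3 → ℝ :=
      ![(α - 1) * h * vn - α / (2 * g) * lam1 * cext * (α * cext - vne) -
          α / (2 * g) * lam3 * cext * (α * cext + vne),
        (α / 2 - 1) * h * v1 * vn + (1 - 2 * α) * (g * h ^ 2 / 2) * n1 -
          1 / (4 * g) * lam1 * cext * (α * cext - vne) * (α * v1 - 2 * c * n1) -
          1 / (4 * g) * lam3 * cext * (α * cext + vne) * (α * v1 + 2 * c * n1) +
          lam2 * hbar * vte * n2,
        (α / 2 - 1) * h * v2 * vn + (1 - 2 * α) * (g * h ^ 2 / 2) * n2 -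
          1 / (4 * g) * lam1 * cext * (α * cext - vne) * (α * v2 - 2 * c * n2) -
          1 / (4 * g) * lam3 * cext * (α * cext + vne) * (α * v2 + 2 * c * n2) -
          lam2 * hbar * vte * n1]
    Fent + V ⬝ᵥ (Fs - Fn) ≥
      -(cext ^ 2 / (4 * g) *
        ((cext + |vne|) * (α * cext - vne) ^ 2 + 2 * |vne| * vte ^ 2 +
          (|vne| - cext) * (α * cext + vne) ^ 2)) := by
  intro α hα
  have hc2 : c ^ 2 = g * h := hc ▸ Real.sq_sqrt (mul_pos hg hh).le
  have hα2 : α ^ 2 + 2 * α = 2 := by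
    rw [hα]; linear_combination Real.sq_sqrt (show (0 : ℝ) ≤ 3 by norm_num)
  have hhbar : g * √(h * hext) = c * cext := by
    rw [hc, hce, sqrt_mul_mul_sqrt_mul hg.le hh.le]
  exact le_inflowEntropyRate hg hn hc2 (hc ▸ Real.sqrt_nonneg _) hα2 hhbar hvn hvτ
    (hce ▸ Real.sqrt_nonneg _) hsup.le hsupe.le

/-- Entropy bound for the supercritical inflow flux: the boundary term
`F_n^ent + Vᵀ(F* − F_n)` is bounded below solely by external data. -/
theorem swe_supercritical_inflow_entropy_bound
    (g h v1 v2 n1 n2 hext v1e v2e c vn vτ cext vne vte : ℝ)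
    (hg : 0 < g) (hh : 0 < h) (hhe : 0 < hext) (hn : n1 ^ 2 + n2 ^ 2 = 1)
    (hc : c = Real.sqrt (g * h)) (hvn : vn = n1 * v1 + n2 * v2)
    (hvτ : vτ = -n2 * v1 + n1 * v2)
    (hce : cext = Real.sqrt (g * hext)) (hvne : vne = n1 * v1e + n2 * v2e)
    (hvte : vte = -n2 * v1e + n1 * v2e)
    (hsup : vn < -c) (hsupe : vne < -cext) :
    ∀ α : ℝ, α = -1 + Real.sqrt 3 →
    let lam1 : ℝ := Real.sqrt ((|vn| + c) * (|vne| + cext))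
    let lam2 : ℝ := Real.sqrt (|vn| * |vne|)
    let lam3 : ℝ := Real.sqrt ((|vn| - c) * (|vne| - cext))
    let hbar : ℝ := Real.sqrt (h * hext)
    let V : Fin 3 → ℝ := ![g * h - (v1 ^ 2 + v2 ^ 2) / 2, v1, v2]
    let Fn : Fin 3 → ℝ :=
      ![h * vn, h * v1 * vn + g / 2 * h ^ 2 * n1, h * v2 * vn + g / 2 * h ^ 2 * n2]
    let Fent : ℝ := h * vn / 2 * (v1 ^ 2 + v2 ^ 2) + g * h ^ 2 * vn
    let Fs : Fin 3 → ℝ :=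
      ![(α - 1) * h * vn - α / (2 * g) * lam1 * cext * (α * cext - vne) -
          α / (2 * g) * lam3 * cext * (α * cext + vne),
        (α / 2 - 1) * h * v1 * vn + (1 - 2 * α) * (g * h ^ 2 / 2) * n1 -
          1 / (4 * g) * lam1 * cext * (α * cext - vne) * (α * v1 - 2 * c * n1) -
          1 / (4 * g) * lam3 * cext * (α * cext + vne) * (α * v1 + 2 * c * n1) +
          lam2 * hbar * vte * n2,
        (α / 2 - 1) * h * v2 * vn + (1 - 2 * α) * (g * h ^ 2 / 2) * n2 -
          1 / (4 * g) * lam1 * cext * (α * cext - vne) * (α * v2 - 2 * c * n2) -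
          1 / (4 * g) * lam3 * cext * (α * cext + vne) * (α * v2 + 2 * c * n2) -
          lam2 * hbar * vte * n1]
    Fent + V ⬝ᵥ (Fs - Fn) ≥
      -(cext ^ 2 / (4 * g) *
        ((cext + |vne|) * (α * cext - vne) ^ 2 + 2 * |vne| * vte ^ 2 +
          (|vne| - cext) * (α * cext + vne) ^ 2)) :=
  swe_supercritical_inflow_entropy_bound_general g h v1 v2 n1 n2 hext c vn vτ cext vne vte hg hh hn
    hc hvn hvτ hce hsup hsupe
end
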